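/- arXiv:0706.4421 — 6 statements merged into one kernel-verified Lean document; each statement's English description precedes it below -/
import Mathlib

section
/- Let X be a connected graph on which a group G acts by graph automorphisms, transitively on the vertex set. Fix a base vertex v0, let H be the stabiliser of v0 in G, and suppose S0 generates H. Suppose {r_λ}_{λ∈Λ} ⊆ G is a set of elements such that the oriented edges (v0, v0·r_λ) form a complete set of representatives for the H-orbits of oriented edges emanating from v0. Then G is generated by S0 ∪ {r_λ}_{λ∈Λ}. -/
/-- If a group `G` acts by graph automorphisms on a connected graph `X`, transitively on
vertices, `S₀` generates the stabiliser `H` of a base vertex `v₀`, and the oriented edges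
`(v₀, r l • v₀)` form a complete set of representatives for the `H`-orbits of oriented edges
emanating from `v₀`, then `G` is generated by `S₀` together with the `r l`. -/
theorem stmt0 {V : Type*} {G : Type*} [Group G] [MulAction G V]
    (X : SimpleGraph V) (hconn : X.Connected)
    (hact : ∀ (g : G) (u v : V), X.Adj u v → X.Adj (g • u) (g • v))
    (v₀ : V)
    (htrans : ∀ v : V, ∃ g : G, g • v₀ = v)
    (S₀ : Set G) (hS₀ : Subgroup.closure S₀ = MulAction.stabilizer G v₀)
    {Λ : Type*} (r : Λ → G)
    (hedge : ∀ l : Λ, X.Adj v₀ (r l • v₀))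
    (hrep : ∀ u : V, X.Adj v₀ u →
      ∃ (l : Λ) (h : G), h ∈ MulAction.stabilizer G v₀ ∧ h • (r l • v₀) = u)
    (hdistinct : ∀ l l' : Λ,
      (∃ h ∈ MulAction.stabilizer G v₀, h • (r l • v₀) = r l' • v₀) → l = l') :
    Subgroup.closure (S₀ ∪ Set.range r) = ⊤ := by
  set K := Subgroup.closure (S₀ ∪ Set.range r) with hK
  have hHK : MulAction.stabilizer G v₀ ≤ K := by
    rw [← hS₀]
    exact Subgroup.closure_mono Set.subset_union_left
  have hrK : ∀ l : Λ, r l ∈ K := fun l =>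
    Subgroup.subset_closure (Set.mem_union_right _ ⟨l, rfl⟩)
  -- step: if v is reachable via K and u is adjacent to v, then u is reachable via K
  have step : ∀ (k : G), k ∈ K → ∀ u : V, X.Adj (k • v₀) u →
      ∃ k' : G, k' ∈ K ∧ k' • v₀ = u := by
    intro k hk u hadj
    have h1 : X.Adj v₀ (k⁻¹ • u) := by
      have := hact k⁻¹ _ _ hadj
      rwa [inv_smul_smul] at this
    obtain ⟨l, h, hh, hhu⟩ := hrep _ h1
    refine ⟨k * h * r l, mul_mem (mul_mem hk (hHK hh)) (hrK l), ?_⟩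
    have : (k * h * r l) • v₀ = k • (h • (r l • v₀)) := by
      simp [mul_smul]
    rw [this, hhu, smul_inv_smul]
  have key : ∀ v : V, ∃ k : G, k ∈ K ∧ k • v₀ = v := by
    have walkcase : ∀ (a b : V), X.Walk a b → (∃ k : G, k ∈ K ∧ k • v₀ = a) →
        ∃ k : G, k ∈ K ∧ k • v₀ = b := by
      intro a b w
      induction w with
      | nil => exact id
      | cons hadj _ ih =>
        intro ⟨k, hk, hkv⟩
        exact ih (step k hk _ (hkv ▸ hadj))
    intro v
    obtain ⟨w⟩ := hconn v₀ v
    exact walkcase _ _ w ⟨1, one_mem K, one_smul G v₀⟩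
  rw [eq_top_iff]
  intro g _
  obtain ⟨k, hk, hkv⟩ := key (g • v₀)
  have hst : k⁻¹ * g ∈ MulAction.stabilizer G v₀ := by
    rw [MulAction.mem_stabilizer_iff, mul_smul, ← hkv, inv_smul_smul]
  have : g = k * (k⁻¹ * g) := by group
  rw [this]
  exact mul_mem hk (hHK hst)
end

section
/- In the braid group B_{2n} (n ≥ 2), with r_1 = σ_2 σ_1 σ_3^{-1} σ_2^{-1}, s_1 = σ_2 σ_1 σ_3 σ_2 and t_1 = σ_1, the relation r_1 t_1 s_1 r_1 = s_1 t_1 holds. -/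
/-- The braid relations on `m` generators `σ_1, …, σ_m` (indexed by `Fin m`):
`σᵢσⱼ = σⱼσᵢ` for `|i−j| > 1` and `σᵢσⱼσᵢ = σⱼσᵢσⱼ` for `|i−j| = 1`. -/
def braidRels (m : ℕ) : Set (FreeGroup (Fin m)) :=
  { w | (∃ i j : Fin m, (i : ℕ) + 1 < (j : ℕ) ∧
          w = FreeGroup.of i * FreeGroup.of j * (FreeGroup.of i)⁻¹ * (FreeGroup.of j)⁻¹) ∨
        (∃ i j : Fin m, (i : ℕ) + 1 = (j : ℕ) ∧
          w = FreeGroup.of i * FreeGroup.of j * FreeGroup.of i *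
              (FreeGroup.of j * FreeGroup.of i * FreeGroup.of j)⁻¹) }

/-- The braid group on `m + 1` strands, with generators `σ_1, …, σ_m`. -/
def BraidGroup (m : ℕ) : Type := PresentedGroup (braidRels m)

instance (m : ℕ) : Group (BraidGroup m) :=
  inferInstanceAs (Group (PresentedGroup (braidRels m)))

/-- The standard Artin generator `σ_k` (for `1 ≤ k ≤ m`). -/
def bσ {m : ℕ} (k : ℕ) : BraidGroup m :=
  if h : k - 1 < m then PresentedGroup.of (⟨k - 1, h⟩ : Fin m) else 1

/-- `sᵢ = σ_{2i} σ_{2i−1} σ_{2i+1} σ_{2i}`. -/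
def bs {m : ℕ} (i : ℕ) : BraidGroup m := bσ (2*i) * bσ (2*i - 1) * bσ (2*i + 1) * bσ (2*i)

/-- `tᵢ = σ_{2i−1}`. -/
def bt {m : ℕ} (i : ℕ) : BraidGroup m := bσ (2*i - 1)

/-- `pᵢ = σ_{2i} σ_{2i−1} σ_{2i+1}⁻¹ σ_{2i}⁻¹`. -/
def bp {m : ℕ} (i : ℕ) : BraidGroup m := bσ (2*i) * bσ (2*i - 1) * (bσ (2*i + 1))⁻¹ * (bσ (2*i))⁻¹

/-- `r₁ = σ₂ σ₁ σ₃⁻¹ σ₂⁻¹`. -/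
def br1 {m : ℕ} : BraidGroup m := bσ 2 * bσ 1 * (bσ 3)⁻¹ * (bσ 2)⁻¹

/-- `r₂ = σ₄ σ₃ σ₂ σ₁ σ₅⁻¹ σ₄⁻¹ σ₃⁻¹ σ₂⁻¹`. -/
def br2 {m : ℕ} : BraidGroup m :=
  bσ 4 * bσ 3 * bσ 2 * bσ 1 * (bσ 5)⁻¹ * (bσ 4)⁻¹ * (bσ 3)⁻¹ * (bσ 2)⁻¹


lemma rel_one {m : ℕ} {r : FreeGroup (Fin m)} (h : r ∈ braidRels m) :
    PresentedGroup.mk (braidRels m) r = 1 := by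
  have : r ∈ Subgroup.normalClosure (braidRels m) := Subgroup.subset_normalClosure h
  exact (QuotientGroup.eq_one_iff r).2 this

lemma braid_comm {m : ℕ} (i j : Fin m) (h : (i : ℕ) + 1 < j) :
    (PresentedGroup.of i : BraidGroup m) * PresentedGroup.of j =
      PresentedGroup.of j * PresentedGroup.of i := by
  have h1 := rel_one (m := m) (Or.inl ⟨i, j, h, rfl⟩)
  simp only [map_mul, map_inv] at h1
  have := mul_eq_one_iff_eq_inv.1 h1
  simpa [mul_inv_eq_iff_eq_mul, PresentedGroup.of] using this

lemma braid_braid {m : ℕ} (i j : Fin m) (h : (i : ℕ) + 1 = j) :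
    (PresentedGroup.of i : BraidGroup m) * PresentedGroup.of j * PresentedGroup.of i =
      PresentedGroup.of j * PresentedGroup.of i * PresentedGroup.of j := by
  have h1 := rel_one (m := m) (Or.inr ⟨i, j, h, rfl⟩)
  simp only [map_mul, map_inv] at h1
  have := mul_eq_one_iff_eq_inv.1 h1
  simpa [PresentedGroup.of] using this

lemma key_identity {G : Type*} [Group G] (a b c : G)
    (hab : a * b * a = b * a * b) (hbc : b * c * b = c * b * c) (hac : a * c = c * a) :
    (b * a * c⁻¹ * b⁻¹) * a * (b * a * c * b) * (b * a * c⁻¹ * b⁻¹) = (b * a * c * b) * a := by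
  have habx : ∀ x : G, a * (b * (a * x)) = b * (a * (b * x)) := by
    intro x
    rw [show a * (b * (a * x)) = (a * b * a) * x by group, hab]; group
  have hacx : ∀ x : G, c⁻¹ * (a * x) = a * (c⁻¹ * x) := by
    intro x
    have h : a * c⁻¹ = c⁻¹ * a := by
      rw [show a * c⁻¹ = c⁻¹ * (c * a) * c⁻¹ by group, ← hac]; group
    rw [show c⁻¹ * (a * x) = (c⁻¹ * a) * x by group, ← h]; group
  have hacx' : ∀ x : G, a * (c⁻¹ * x) = c⁻¹ * (a * x) := fun x => (hacx x).symm
  have hacx2 : ∀ x : G, a * (c * x) = c * (a * x) := by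
    intro x; rw [show a * (c * x) = (a * c) * x by group, hac]; group
  have hR3 : ∀ x : G, c⁻¹ * (b * (c * x)) = b * (c * (b⁻¹ * x)) := by
    intro x
    have : c * (c⁻¹ * (b * (c * x))) = c * (b * (c * (b⁻¹ * x))) := by
      rw [show c * (b * (c * (b⁻¹ * x))) = (c * b * c) * (b⁻¹ * x) by group, ← hbc]; group
    exact mul_left_cancel this
  have hR5 : ∀ x : G, c * (b * (c⁻¹ * x)) = b⁻¹ * (c * (b * x)) := by
    intro x
    have : b * (c * (b * (c⁻¹ * x))) = b * (b⁻¹ * (c * (b * x))) := by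
      rw [show b * (c * (b * (c⁻¹ * x))) = (b * c * b) * (c⁻¹ * x) by group, hbc]; group
    exact mul_left_cancel this
  calc (b * a * c⁻¹ * b⁻¹) * a * (b * a * c * b) * (b * a * c⁻¹ * b⁻¹)
      = b * (a * (c⁻¹ * (b⁻¹ * (a * (b * (a * (c * (b * (b * (a * (c⁻¹ * b⁻¹))))))))))) := by
        group
    _ = b * (a * (c * (b * a))) := by
        rw [habx, inv_mul_cancel_left, hacx, hR3, inv_mul_cancel_left, hacx',
          hR5, mul_inv_cancel_left, hacx2, habx, mul_inv_cancel, mul_one]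
    _ = (b * a * c * b) * a := by group

theorem stmt6 (n : ℕ) (hn : 2 ≤ n) :
    (br1 : BraidGroup (2 * n - 1)) * bt 1 * bs 1 * br1 = bs 1 * bt 1 := by
  have h0 : (1:ℕ) - 1 < 2*n-1 := by omega
  have h1 : (2:ℕ) - 1 < 2*n-1 := by omega
  have h2 : (3:ℕ) - 1 < 2*n-1 := by omega
  have e1 : (bσ 1 : BraidGroup (2*n-1)) = PresentedGroup.of ⟨1-1, h0⟩ := dif_pos h0
  have e2 : (bσ 2 : BraidGroup (2*n-1)) = PresentedGroup.of ⟨2-1, h1⟩ := dif_pos h1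
  have e3 : (bσ 3 : BraidGroup (2*n-1)) = PresentedGroup.of ⟨3-1, h2⟩ := dif_pos h2
  have hnum1 : 2 * 1 = 2 := rfl
  have hnum2 : 2 * 1 - 1 = 1 := rfl
  have hnum3 : 2 * 1 + 1 = 3 := rfl
  simp only [br1, bs, bt, hnum1, hnum2, hnum3]
  rw [e1, e2, e3]
  exact key_identity _ _ _
    (braid_braid ⟨1-1, h0⟩ ⟨2-1, h1⟩ rfl)
    (braid_braid ⟨2-1, h1⟩ ⟨3-1, h2⟩ rfl)
    (braid_comm ⟨1-1, h0⟩ ⟨3-1, h2⟩ (by norm_num))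
end

section
/- In the braid group B_{2n} (n ≥ 2), with r_1 = σ_2 σ_1 σ_3^{-1} σ_2^{-1}, s_1 = σ_2 σ_1 σ_3 σ_2 and t_1 = σ_1, t_2 = σ_3, the conjugation relation r_1 (s_1 s_1 t_1 t_1) r_1^{-1} = s_1 s_1 t_2 t_2 holds. -/
lemma rel_eq_one {α : Type*} {rels : Set (FreeGroup α)} {r : FreeGroup α} (h : r ∈ rels) :
    PresentedGroup.mk rels r = 1 :=
  (QuotientGroup.eq_one_iff r).mpr (Subgroup.subset_normalClosure h)

lemma braid_rel {m : ℕ} {i j : Fin m} (h : (i : ℕ) + 1 = j) :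
    (PresentedGroup.of i : BraidGroup m) * PresentedGroup.of j * PresentedGroup.of i =
      PresentedGroup.of j * PresentedGroup.of i * PresentedGroup.of j := by
  have h1 : (FreeGroup.of i * FreeGroup.of j * FreeGroup.of i *
      (FreeGroup.of j * FreeGroup.of i * FreeGroup.of j)⁻¹ : FreeGroup (Fin m)) ∈ braidRels m :=
    Or.inr ⟨i, j, h, rfl⟩
  have h2 := rel_eq_one h1
  simp only [map_mul, map_inv] at h2
  rw [mul_inv_eq_one] at h2
  exact h2

lemma comm_rel {m : ℕ} {i j : Fin m} (h : (i : ℕ) + 1 < j) :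
    (PresentedGroup.of i : BraidGroup m) * PresentedGroup.of j =
      PresentedGroup.of j * PresentedGroup.of i := by
  have h1 : (FreeGroup.of i * FreeGroup.of j * (FreeGroup.of i)⁻¹ * (FreeGroup.of j)⁻¹ :
      FreeGroup (Fin m)) ∈ braidRels m := Or.inl ⟨i, j, h, rfl⟩
  have h2 := rel_eq_one h1
  simp only [map_mul, map_inv] at h2
  have h3 : (PresentedGroup.of i : BraidGroup m) * PresentedGroup.of j *
      (PresentedGroup.of j * PresentedGroup.of i)⁻¹ = 1 := by rw [← h2]; group; rfl
  exact mul_inv_eq_one.mp h3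

lemma bσ_eq {m k : ℕ} (h : k - 1 < m) : (bσ k : BraidGroup m) = PresentedGroup.of ⟨k - 1, h⟩ :=
  dif_pos h

theorem key_lemma {G : Type*} [Group G] (a b c : G)
    (h1 : a*b*a = b*a*b) (h2 : b*c*b = c*b*c) (h3 : a*c = c*a) :
    (b*a*c⁻¹*b⁻¹) * ((b*a*c*b)*(b*a*c*b)*a*a) * (b*a*c⁻¹*b⁻¹)⁻¹
      = (b*a*c*b)*(b*a*c*b)*c*c := by
  have pos : b*a*a*b*b*a*c*b*a*a*b*c = b*a*c*b*b*a*c*b*c*c*b*a := by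
    calc b*a*a*b*b*a*c*b*a*a*b*c
      _ = b*a*a*b*b*(a*c)*b*a*a*b*c := by simp only [mul_assoc]
      _ = b*a*a*b*b*(c*a)*b*a*a*b*c := by rw [h3]
      _ = b*a*a*b*b*c*(a*b*a)*a*b*c := by simp only [mul_assoc]
      _ = b*a*a*b*b*c*(b*a*b)*a*b*c := by rw [h1]
      _ = b*a*a*b*(b*c*b)*a*b*a*b*c := by simp only [mul_assoc]
      _ = b*a*a*b*(c*b*c)*a*b*a*b*c := by rw [h2]
      _ = b*a*a*(b*c*b)*c*a*b*a*b*c := by simp only [mul_assoc]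
      _ = b*a*a*(c*b*c)*c*a*b*a*b*c := by rw [h2]
      _ = b*a*(a*c)*b*c*c*a*b*a*b*c := by simp only [mul_assoc]
      _ = b*a*(c*a)*b*c*c*a*b*a*b*c := by rw [h3]
      _ = b*a*c*a*b*c*(c*a)*b*a*b*c := by simp only [mul_assoc]
      _ = b*a*c*a*b*c*(a*c)*b*a*b*c := by rw [← h3]
      _ = b*a*c*a*b*(c*a)*c*b*a*b*c := by simp only [mul_assoc]
      _ = b*a*c*a*b*(a*c)*c*b*a*b*c := by rw [← h3]
      _ = b*a*c*(a*b*a)*c*c*b*a*b*c := by simp only [mul_assoc]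
      _ = b*a*c*(b*a*b)*c*c*b*a*b*c := by rw [h1]
      _ = b*a*c*b*a*b*c*c*(b*a*b)*c := by simp only [mul_assoc]
      _ = b*a*c*b*a*b*c*c*(a*b*a)*c := by rw [← h1]
      _ = b*a*c*b*a*b*c*(c*a)*b*a*c := by simp only [mul_assoc]
      _ = b*a*c*b*a*b*c*(a*c)*b*a*c := by rw [← h3]
      _ = b*a*c*b*a*b*(c*a)*c*b*a*c := by simp only [mul_assoc]
      _ = b*a*c*b*a*b*(a*c)*c*b*a*c := by rw [← h3]
      _ = b*a*c*b*(a*b*a)*c*c*b*a*c := by simp only [mul_assoc]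
      _ = b*a*c*b*(b*a*b)*c*c*b*a*c := by rw [h1]
      _ = b*a*c*b*b*a*b*c*c*b*(a*c) := by simp only [mul_assoc]
      _ = b*a*c*b*b*a*b*c*c*b*(c*a) := by rw [h3]
      _ = b*a*c*b*b*a*b*c*(c*b*c)*a := by simp only [mul_assoc]
      _ = b*a*c*b*b*a*b*c*(b*c*b)*a := by rw [← h2]
      _ = b*a*c*b*b*a*(b*c*b)*c*b*a := by simp only [mul_assoc]
      _ = b*a*c*b*b*a*(c*b*c)*c*b*a := by rw [h2]
      _ = b*a*c*b*b*a*c*b*c*c*b*a := by simp only [mul_assoc]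
  rw [mul_inv_eq_iff_eq_mul]
  apply mul_right_cancel (b := b*c)
  calc (b*a*c⁻¹*b⁻¹) * ((b*a*c*b)*(b*a*c*b)*a*a) * (b*c)
      = b*a*(c⁻¹*(a*c))*b*(b*a*c*b)*a*a*b*c := by group
    _ = b*a*(c⁻¹*(c*a))*b*(b*a*c*b)*a*a*b*c := by rw [h3]
    _ = b*a*a*b*b*a*c*b*a*a*b*c := by group
    _ = b*a*c*b*b*a*c*b*c*c*b*a := pos
    _ = (b*a*c*b)*(b*a*c*b)*c*c * (b*a*c⁻¹*b⁻¹) * (b*c) := by group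

theorem stmt7 (n : ℕ) (hn : 2 ≤ n) :
    (br1 : BraidGroup (2 * n - 1)) * (bs 1 * bs 1 * bt 1 * bt 1) * br1⁻¹ =
      bs 1 * bs 1 * bt 2 * bt 2 := by
  have h0 : (0 : ℕ) < 2 * n - 1 := by omega
  have h1 : (1 : ℕ) < 2 * n - 1 := by omega
  have h2 : (2 : ℕ) < 2 * n - 1 := by omega
  set a : BraidGroup (2 * n - 1) := PresentedGroup.of ⟨0, h0⟩ with ha
  set b : BraidGroup (2 * n - 1) := PresentedGroup.of ⟨1, h1⟩ with hb
  set c : BraidGroup (2 * n - 1) := PresentedGroup.of ⟨2, h2⟩ with hc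
  have e1 : (bσ 1 : BraidGroup (2 * n - 1)) = a := bσ_eq h0
  have e2 : (bσ 2 : BraidGroup (2 * n - 1)) = b := bσ_eq h1
  have e3 : (bσ 3 : BraidGroup (2 * n - 1)) = c := bσ_eq h2
  have hr1 : a * b * a = b * a * b := braid_rel rfl
  have hr2 : b * c * b = c * b * c := braid_rel rfl
  have hr3 : a * c = c * a := comm_rel (by norm_num)
  have fs : (bs 1 : BraidGroup (2 * n - 1)) = b * a * c * b := by
    simp only [bs]; norm_num [e1, e2, e3]
  have ft1 : (bt 1 : BraidGroup (2 * n - 1)) = a := by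
    simp only [bt]; norm_num [e1]
  have ft2 : (bt 2 : BraidGroup (2 * n - 1)) = c := by
    simp only [bt]; norm_num [e3]
  have fr : (br1 : BraidGroup (2 * n - 1)) = b * a * c⁻¹ * b⁻¹ := by
    simp only [br1]; rw [e1, e2, e3]
  rw [fs, ft1, ft2, fr]
  exact key_lemma a b c hr1 hr2 hr3
end

section
/- In the braid group B_{2n} (n ≥ 3), with r_1 = σ_2 σ_1 σ_3^{-1} σ_2^{-1}, s_1 = σ_2 σ_1 σ_3 σ_2 and s_2 = σ_4 σ_3 σ_5 σ_4, the relation r_1 (s_2 s_1 s_1 s_2) r_1^{-1} = s_2 s_1 s_1 s_2 holds. -/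
lemma braidRels_one {m : ℕ} {r : FreeGroup (Fin m)} (h : r ∈ braidRels m) :
    (PresentedGroup.mk (braidRels m) r : BraidGroup m) = 1 :=
  (QuotientGroup.eq_one_iff r).mpr (Subgroup.subset_normalClosure h)

lemma bσ_comm {m : ℕ} (i j : ℕ) (h1 : 1 ≤ i) (hij : i + 1 < j) (hj : j ≤ m) :
    (bσ i : BraidGroup m) * bσ j = bσ j * bσ i := by
  have hi' : i - 1 < m := by omega
  have hj' : j - 1 < m := by omega
  set i' : Fin m := ⟨i - 1, hi'⟩
  set j' : Fin m := ⟨j - 1, hj'⟩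
  have hr : (FreeGroup.of i' * FreeGroup.of j' * (FreeGroup.of i')⁻¹ * (FreeGroup.of j')⁻¹)
      ∈ braidRels m := Or.inl ⟨i', j', by simp [i', j']; omega, rfl⟩
  have h := braidRels_one hr
  simp only [map_mul, map_inv] at h
  have h2 : (PresentedGroup.mk (braidRels m) (FreeGroup.of i')) *
      (PresentedGroup.mk (braidRels m) (FreeGroup.of j')) =
      (PresentedGroup.mk (braidRels m) (FreeGroup.of j')) *
      (PresentedGroup.mk (braidRels m) (FreeGroup.of i')) := by
    have := commutatorElement_eq_one_iff_mul_comm.mp (by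
      show _ = (1 : BraidGroup m)
      rw [commutatorElement_def]
      exact h)
    exact this
  show (bσ i : BraidGroup m) * bσ j = bσ j * bσ i
  rw [show (bσ i : BraidGroup m) = PresentedGroup.of i' from dif_pos hi', show (bσ j : BraidGroup m) = PresentedGroup.of j' from dif_pos hj']
  exact h2

lemma bσ_braid {m : ℕ} (i : ℕ) (h1 : 1 ≤ i) (h2 : i + 1 ≤ m) :
    (bσ i : BraidGroup m) * bσ (i+1) * bσ i = bσ (i+1) * bσ i * bσ (i+1) := by
  have hi' : i - 1 < m := by omega
  have hj' : i + 1 - 1 < m := by omega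
  set i' : Fin m := ⟨i - 1, hi'⟩
  set j' : Fin m := ⟨i + 1 - 1, hj'⟩
  have hr : (FreeGroup.of i' * FreeGroup.of j' * FreeGroup.of i' *
      (FreeGroup.of j' * FreeGroup.of i' * FreeGroup.of j')⁻¹) ∈ braidRels m :=
    Or.inr ⟨i', j', by simp [i', j']; omega, rfl⟩
  have h := braidRels_one hr
  simp only [map_mul, map_inv] at h
  have h2 := mul_inv_eq_one.mp h
  rw [show (bσ i : BraidGroup m) = PresentedGroup.of i' from dif_pos hi', show (bσ (i+1) : BraidGroup m) = PresentedGroup.of j' from dif_pos hj']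
  exact h2

section Key
variable {G : Type*} [Group G]

lemma bv1 {x y : G} (h : x*y*x = y*x*y) : x*y*x⁻¹ = y⁻¹*x*y := by
  calc x*y*x⁻¹ = y⁻¹*(y*x*y)*x⁻¹ := by group
  _ = y⁻¹*(x*y*x)*x⁻¹ := by rw [h]
  _ = y⁻¹*x*y := by group

lemma bv2 {x y : G} (h : x*y*x = y*x*y) : x*y⁻¹*x⁻¹ = y⁻¹*x⁻¹*y := by
  calc x*y⁻¹*x⁻¹ = y⁻¹*x⁻¹*(x*y*x)*y⁻¹*x⁻¹ := by group
  _ = y⁻¹*x⁻¹*(y*x*y)*y⁻¹*x⁻¹ := by rw [h]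
  _ = y⁻¹*x⁻¹*y := by group

lemma bv3 {x y : G} (h : x*y*x = y*x*y) : x⁻¹*y*x = y*x*y⁻¹ := by
  calc x⁻¹*y*x = x⁻¹*(y*x*y)*y⁻¹ := by group
  _ = x⁻¹*(x*y*x)*y⁻¹ := by rw [h]
  _ = y*x*y⁻¹ := by group

lemma bv4 {x y : G} (h : x*y*x = y*x*y) : x⁻¹*y⁻¹*x = y*x⁻¹*y⁻¹ := by
  calc x⁻¹*y⁻¹*x = y*(y*x*y)⁻¹*x := by group
  _ = y*(x*y*x)⁻¹*x := by rw [h]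
  _ = y*x⁻¹*y⁻¹ := by group

lemma bv5 {x y : G} (h : x*y*x = y*x*y) : x⁻¹*y⁻¹*x⁻¹ = y⁻¹*x⁻¹*y⁻¹ := by
  calc x⁻¹*y⁻¹*x⁻¹ = (x*y*x)⁻¹ := by group
  _ = (y*x*y)⁻¹ := by rw [h]
  _ = y⁻¹*x⁻¹*y⁻¹ := by group

set_option maxHeartbeats 1600000 in
lemma keyA (a b c d e : G)
    (hab : a*b*a = b*a*b) (hbc : b*c*b = c*b*c) (hcd : c*d*c = d*c*d) (hde : d*e*d = e*d*e)
    (hac : Commute a c) (had : Commute a d) (hae : Commute a e)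
    (hbd : Commute b d) (hbe : Commute b e) (hce : Commute c e) :
    b*a*c*b*d*c*e*d*b*a*c*b*b*a*c*b*d*c*e*d = d*c*e*d*b*a*c*b*b*a*c*b*d*c*e*d*b*a*c*b := by
  have cac := hac
  have cad := had
  have cae := hae
  have cbd := hbd
  have cbe := hbe
  have cce := hce
  calc b*a*c*b*d*c*e*d*b*a*c*b*b*a*c*b*d*c*e*d = (b*a*c) * (b*d) * (c*e*d*b*a*c*b*b*a*c*b*d*c*e*d) := by group
    _ = (b*a*c) * (d*b) * (c*e*d*b*a*c*b*b*a*c*b*d*c*e*d) := by exact congrArg (fun z => (b*a*c) * z * (c*e*d*b*a*c*b*b*a*c*b*d*c*e*d)) (cbd.eq)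
    _ = (b*a*c*d*b*c*e) * (d*b) * (a*c*b*b*a*c*b*d*c*e*d) := by group
    _ = (b*a*c*d*b*c*e) * (b*d) * (a*c*b*b*a*c*b*d*c*e*d) := by exact congrArg (fun z => (b*a*c*d*b*c*e) * z * (a*c*b*b*a*c*b*d*c*e*d)) ((cbd.symm).eq)
    _ = (b*a*c*d*b*c) * (e*b) * (d*a*c*b*b*a*c*b*d*c*e*d) := by group
    _ = (b*a*c*d*b*c) * (b*e) * (d*a*c*b*b*a*c*b*d*c*e*d) := by exact congrArg (fun z => (b*a*c*d*b*c) * z * (d*a*c*b*b*a*c*b*d*c*e*d)) ((cbe.symm).eq)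
    _ = (b*a*c*d*b*c*b*e) * (d*a) * (c*b*b*a*c*b*d*c*e*d) := by group
    _ = (b*a*c*d*b*c*b*e) * (a*d) * (c*b*b*a*c*b*d*c*e*d) := by exact congrArg (fun z => (b*a*c*d*b*c*b*e) * z * (c*b*b*a*c*b*d*c*e*d)) ((cad.symm).eq)
    _ = (b*a*c*d*b*c*b) * (e*a) * (d*c*b*b*a*c*b*d*c*e*d) := by group
    _ = (b*a*c*d*b*c*b) * (a*e) * (d*c*b*b*a*c*b*d*c*e*d) := by exact congrArg (fun z => (b*a*c*d*b*c*b) * z * (d*c*b*b*a*c*b*d*c*e*d)) ((cae.symm).eq)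
    _ = (b*a*c*d*b*c*b*a*e*d*c*b*b*a*c) * (b*d) * (c*e*d) := by group
    _ = (b*a*c*d*b*c*b*a*e*d*c*b*b*a*c) * (d*b) * (c*e*d) := by exact congrArg (fun z => (b*a*c*d*b*c*b*a*e*d*c*b*b*a*c) * z * (c*e*d)) (cbd.eq)
    _ = (b*a*c*d) * (b*c*b) * (a*e*d*c*b*b*a*c*d*b*c*e*d) := by group
    _ = (b*a*c*d) * (c*b*c) * (a*e*d*c*b*b*a*c*d*b*c*e*d) := by exact congrArg (fun z => (b*a*c*d) * z * (a*e*d*c*b*b*a*c*d*b*c*e*d)) hbc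
    _ = (b*a*c*d*c*b) * (c*a) * (e*d*c*b*b*a*c*d*b*c*e*d) := by group
    _ = (b*a*c*d*c*b) * (a*c) * (e*d*c*b*b*a*c*d*b*c*e*d) := by exact congrArg (fun z => (b*a*c*d*c*b) * z * (e*d*c*b*b*a*c*d*b*c*e*d)) ((cac.symm).eq)
    _ = (b*a*c*d*c*b*a) * (c*e) * (d*c*b*b*a*c*d*b*c*e*d) := by group
    _ = (b*a*c*d*c*b*a) * (e*c) * (d*c*b*b*a*c*d*b*c*e*d) := by exact congrArg (fun z => (b*a*c*d*c*b*a) * z * (d*c*b*b*a*c*d*b*c*e*d)) (cce.eq)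
    _ = (b*a) * (c*d*c) * (b*a*e*c*d*c*b*b*a*c*d*b*c*e*d) := by group
    _ = (b*a) * (d*c*d) * (b*a*e*c*d*c*b*b*a*c*d*b*c*e*d) := by exact congrArg (fun z => (b*a) * z * (b*a*e*c*d*c*b*b*a*c*d*b*c*e*d)) hcd
    _ = (b) * (a*d) * (c*d*b*a*e*c*d*c*b*b*a*c*d*b*c*e*d) := by group
    _ = (b) * (d*a) * (c*d*b*a*e*c*d*c*b*b*a*c*d*b*c*e*d) := by exact congrArg (fun z => (b) * z * (c*d*b*a*e*c*d*c*b*b*a*c*d*b*c*e*d)) (cad.eq)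
    _ = (b*d*a*c) * (d*b) * (a*e*c*d*c*b*b*a*c*d*b*c*e*d) := by group
    _ = (b*d*a*c) * (b*d) * (a*e*c*d*c*b*b*a*c*d*b*c*e*d) := by exact congrArg (fun z => (b*d*a*c) * z * (a*e*c*d*c*b*b*a*c*d*b*c*e*d)) ((cbd.symm).eq)
    _ = (b*d*a*c*b) * (d*a) * (e*c*d*c*b*b*a*c*d*b*c*e*d) := by group
    _ = (b*d*a*c*b) * (a*d) * (e*c*d*c*b*b*a*c*d*b*c*e*d) := by exact congrArg (fun z => (b*d*a*c*b) * z * (e*c*d*c*b*b*a*c*d*b*c*e*d)) ((cad.symm).eq)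
    _ = (b*d*a*c*b*a*d*e) * (c*d*c) * (b*b*a*c*d*b*c*e*d) := by group
    _ = (b*d*a*c*b*a*d*e) * (d*c*d) * (b*b*a*c*d*b*c*e*d) := by exact congrArg (fun z => (b*d*a*c*b*a*d*e) * z * (b*b*a*c*d*b*c*e*d)) hcd
    _ = (b*d*a*c*b*a*d*e*d*c) * (d*b) * (b*a*c*d*b*c*e*d) := by group
    _ = (b*d*a*c*b*a*d*e*d*c) * (b*d) * (b*a*c*d*b*c*e*d) := by exact congrArg (fun z => (b*d*a*c*b*a*d*e*d*c) * z * (b*a*c*d*b*c*e*d)) ((cbd.symm).eq)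
    _ = (b*d*a*c*b*a*d*e*d*c*b) * (d*b) * (a*c*d*b*c*e*d) := by group
    _ = (b*d*a*c*b*a*d*e*d*c*b) * (b*d) * (a*c*d*b*c*e*d) := by exact congrArg (fun z => (b*d*a*c*b*a*d*e*d*c*b) * z * (a*c*d*b*c*e*d)) ((cbd.symm).eq)
    _ = (b*d*a*c*b*a*d*e*d*c*b*b) * (d*a) * (c*d*b*c*e*d) := by group
    _ = (b*d*a*c*b*a*d*e*d*c*b*b) * (a*d) * (c*d*b*c*e*d) := by exact congrArg (fun z => (b*d*a*c*b*a*d*e*d*c*b*b) * z * (c*d*b*c*e*d)) ((cad.symm).eq)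
    _ = (b*d*a*c*b*a) * (d*e*d) * (c*b*b*a*d*c*d*b*c*e*d) := by group
    _ = (b*d*a*c*b*a) * (e*d*e) * (c*b*b*a*d*c*d*b*c*e*d) := by exact congrArg (fun z => (b*d*a*c*b*a) * z * (c*b*b*a*d*c*d*b*c*e*d)) hde
    _ = (b*d*a*c*b*a*e*d) * (e*c) * (b*b*a*d*c*d*b*c*e*d) := by group
    _ = (b*d*a*c*b*a*e*d) * (c*e) * (b*b*a*d*c*d*b*c*e*d) := by exact congrArg (fun z => (b*d*a*c*b*a*e*d) * z * (b*b*a*d*c*d*b*c*e*d)) ((cce.symm).eq)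
    _ = (b*d*a*c*b*a*e*d*c) * (e*b) * (b*a*d*c*d*b*c*e*d) := by group
    _ = (b*d*a*c*b*a*e*d*c) * (b*e) * (b*a*d*c*d*b*c*e*d) := by exact congrArg (fun z => (b*d*a*c*b*a*e*d*c) * z * (b*a*d*c*d*b*c*e*d)) ((cbe.symm).eq)
    _ = (b*d*a*c*b*a*e*d*c*b) * (e*b) * (a*d*c*d*b*c*e*d) := by group
    _ = (b*d*a*c*b*a*e*d*c*b) * (b*e) * (a*d*c*d*b*c*e*d) := by exact congrArg (fun z => (b*d*a*c*b*a*e*d*c*b) * z * (a*d*c*d*b*c*e*d)) ((cbe.symm).eq)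
    _ = (b*d*a*c*b*a*e*d*c*b*b) * (e*a) * (d*c*d*b*c*e*d) := by group
    _ = (b*d*a*c*b*a*e*d*c*b*b) * (a*e) * (d*c*d*b*c*e*d) := by exact congrArg (fun z => (b*d*a*c*b*a*e*d*c*b*b) * z * (d*c*d*b*c*e*d)) ((cae.symm).eq)
    _ = (b*d*a*c*b*a*e*d*c*b*b*a*e) * (d*c*d) * (b*c*e*d) := by group
    _ = (b*d*a*c*b*a*e*d*c*b*b*a*e) * (c*d*c) * (b*c*e*d) := by exact congrArg (fun z => (b*d*a*c*b*a*e*d*c*b*b*a*e) * z * (b*c*e*d)) (hcd.symm)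
    _ = (b*d*a*c*b*a*e*d*c*b*b*a) * (e*c) * (d*c*b*c*e*d) := by group
    _ = (b*d*a*c*b*a*e*d*c*b*b*a) * (c*e) * (d*c*b*c*e*d) := by exact congrArg (fun z => (b*d*a*c*b*a*e*d*c*b*b*a) * z * (d*c*b*c*e*d)) ((cce.symm).eq)
    _ = (b*d*a*c*b*a*e*d*c*b*b*a*c*e*d) * (c*b*c) * (e*d) := by group
    _ = (b*d*a*c*b*a*e*d*c*b*b*a*c*e*d) * (b*c*b) * (e*d) := by exact congrArg (fun z => (b*d*a*c*b*a*e*d*c*b*b*a*c*e*d) * z * (e*d)) (hbc.symm)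
    _ = (b*d*a*c*b*a*e*d*c*b*b*a*c*e) * (d*b) * (c*b*e*d) := by group
    _ = (b*d*a*c*b*a*e*d*c*b*b*a*c*e) * (b*d) * (c*b*e*d) := by exact congrArg (fun z => (b*d*a*c*b*a*e*d*c*b*b*a*c*e) * z * (c*b*e*d)) ((cbd.symm).eq)
    _ = (b*d*a*c*b*a*e*d*c*b*b*a*c) * (e*b) * (d*c*b*e*d) := by group
    _ = (b*d*a*c*b*a*e*d*c*b*b*a*c) * (b*e) * (d*c*b*e*d) := by exact congrArg (fun z => (b*d*a*c*b*a*e*d*c*b*b*a*c) * z * (d*c*b*e*d)) ((cbe.symm).eq)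
    _ = (b*d*a*c*b*a*e*d*c*b*b*a*c*b*e*d*c) * (b*e) * (d) := by group
    _ = (b*d*a*c*b*a*e*d*c*b*b*a*c*b*e*d*c) * (e*b) * (d) := by exact congrArg (fun z => (b*d*a*c*b*a*e*d*c*b*b*a*c*b*e*d*c) * z * (d)) (cbe.eq)
    _ = (b*d*a*c*b*a*e*d*c*b*b*a*c*b*e*d) * (c*e) * (b*d) := by group
    _ = (b*d*a*c*b*a*e*d*c*b*b*a*c*b*e*d) * (e*c) * (b*d) := by exact congrArg (fun z => (b*d*a*c*b*a*e*d*c*b*b*a*c*b*e*d) * z * (b*d)) (cce.eq)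
    _ = (b*d*a*c*b*a*e*d*c*b*b*a*c*b*e*d*e*c) * (b*d) := by group
    _ = (b*d*a*c*b*a*e*d*c*b*b*a*c*b*e*d*e*c) * (d*b) := by exact congrArg (fun z => (b*d*a*c*b*a*e*d*c*b*b*a*c*b*e*d*e*c) * z) (cbd.eq)
    _ = (b*d*a*c*b*a*e*d*c*b*b*a*c*b) * (e*d*e) * (c*d*b) := by group
    _ = (b*d*a*c*b*a*e*d*c*b*b*a*c*b) * (d*e*d) * (c*d*b) := by exact congrArg (fun z => (b*d*a*c*b*a*e*d*c*b*b*a*c*b) * z * (c*d*b)) (hde.symm)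
    _ = (b*d*a*c*b*a*e*d*c*b*b*a*c*b*d*e) * (d*c*d) * (b) := by group
    _ = (b*d*a*c*b*a*e*d*c*b*b*a*c*b*d*e) * (c*d*c) * (b) := by exact congrArg (fun z => (b*d*a*c*b*a*e*d*c*b*b*a*c*b*d*e) * z * (b)) (hcd.symm)
    _ = (b*d) * (a*c) * (b*a*e*d*c*b*b*a*c*b*d*e*c*d*c*b) := by group
    _ = (b*d) * (c*a) * (b*a*e*d*c*b*b*a*c*b*d*e*c*d*c*b) := by exact congrArg (fun z => (b*d) * z * (b*a*e*d*c*b*b*a*c*b*d*e*c*d*c*b)) (cac.eq)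
    _ = (b*d*c) * (a*b*a) * (e*d*c*b*b*a*c*b*d*e*c*d*c*b) := by group
    _ = (b*d*c) * (b*a*b) * (e*d*c*b*b*a*c*b*d*e*c*d*c*b) := by exact congrArg (fun z => (b*d*c) * z * (e*d*c*b*b*a*c*b*d*e*c*d*c*b)) hab
    _ = (b*d*c*b*a) * (b*e) * (d*c*b*b*a*c*b*d*e*c*d*c*b) := by group
    _ = (b*d*c*b*a) * (e*b) * (d*c*b*b*a*c*b*d*e*c*d*c*b) := by exact congrArg (fun z => (b*d*c*b*a) * z * (d*c*b*b*a*c*b*d*e*c*d*c*b)) (cbe.eq)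
    _ = (b*d*c*b*a*e) * (b*d) * (c*b*b*a*c*b*d*e*c*d*c*b) := by group
    _ = (b*d*c*b*a*e) * (d*b) * (c*b*b*a*c*b*d*e*c*d*c*b) := by exact congrArg (fun z => (b*d*c*b*a*e) * z * (c*b*b*a*c*b*d*e*c*d*c*b)) (cbd.eq)
    _ = (b*d*c*b*a*e*d) * (b*c*b) * (b*a*c*b*d*e*c*d*c*b) := by group
    _ = (b*d*c*b*a*e*d) * (c*b*c) * (b*a*c*b*d*e*c*d*c*b) := by exact congrArg (fun z => (b*d*c*b*a*e*d) * z * (b*a*c*b*d*e*c*d*c*b)) hbc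
    _ = (b*d*c*b*a*e*d*c*b*c*b) * (a*c) * (b*d*e*c*d*c*b) := by group
    _ = (b*d*c*b*a*e*d*c*b*c*b) * (c*a) * (b*d*e*c*d*c*b) := by exact congrArg (fun z => (b*d*c*b*a*e*d*c*b*c*b) * z * (b*d*e*c*d*c*b)) (cac.eq)
    _ = (b*d*c*b*a*e*d*c*b) * (c*b*c) * (a*b*d*e*c*d*c*b) := by group
    _ = (b*d*c*b*a*e*d*c*b) * (b*c*b) * (a*b*d*e*c*d*c*b) := by exact congrArg (fun z => (b*d*c*b*a*e*d*c*b) * z * (a*b*d*e*c*d*c*b)) (hbc.symm)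
    _ = (b*d*c*b*a*e*d*c*b*b*c) * (b*a*b) * (d*e*c*d*c*b) := by group
    _ = (b*d*c*b*a*e*d*c*b*b*c) * (a*b*a) * (d*e*c*d*c*b) := by exact congrArg (fun z => (b*d*c*b*a*e*d*c*b*b*c) * z * (d*e*c*d*c*b)) (hab.symm)
    _ = (b*d) * (c*b*a*e*d*c*b*b*c*a*b*a*d*e*c*d*c*b) := by group
    _ = (d*b) * (c*b*a*e*d*c*b*b*c*a*b*a*d*e*c*d*c*b) := by exact congrArg (fun z => z * (c*b*a*e*d*c*b*b*c*a*b*a*d*e*c*d*c*b)) (cbd.eq)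
    _ = (d) * (b*c*b) * (a*e*d*c*b*b*c*a*b*a*d*e*c*d*c*b) := by group
    _ = (d) * (c*b*c) * (a*e*d*c*b*b*c*a*b*a*d*e*c*d*c*b) := by exact congrArg (fun z => (d) * z * (a*e*d*c*b*b*c*a*b*a*d*e*c*d*c*b)) hbc
    _ = (d*c*b) * (c*a) * (e*d*c*b*b*c*a*b*a*d*e*c*d*c*b) := by group
    _ = (d*c*b) * (a*c) * (e*d*c*b*b*c*a*b*a*d*e*c*d*c*b) := by exact congrArg (fun z => (d*c*b) * z * (e*d*c*b*b*c*a*b*a*d*e*c*d*c*b)) ((cac.symm).eq)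
    _ = (d*c*b*a) * (c*e) * (d*c*b*b*c*a*b*a*d*e*c*d*c*b) := by group
    _ = (d*c*b*a) * (e*c) * (d*c*b*b*c*a*b*a*d*e*c*d*c*b) := by exact congrArg (fun z => (d*c*b*a) * z * (d*c*b*b*c*a*b*a*d*e*c*d*c*b)) (cce.eq)
    _ = (d*c*b*a*e) * (c*d*c) * (b*b*c*a*b*a*d*e*c*d*c*b) := by group
    _ = (d*c*b*a*e) * (d*c*d) * (b*b*c*a*b*a*d*e*c*d*c*b) := by exact congrArg (fun z => (d*c*b*a*e) * z * (b*b*c*a*b*a*d*e*c*d*c*b)) hcd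
    _ = (d*c*b*a*e*d*c*d*b*b*c*a*b) * (a*d) * (e*c*d*c*b) := by group
    _ = (d*c*b*a*e*d*c*d*b*b*c*a*b) * (d*a) * (e*c*d*c*b) := by exact congrArg (fun z => (d*c*b*a*e*d*c*d*b*b*c*a*b) * z * (e*c*d*c*b)) (cad.eq)
    _ = (d*c*b*a*e*d*c*d*b*b*c*a) * (b*d) * (a*e*c*d*c*b) := by group
    _ = (d*c*b*a*e*d*c*d*b*b*c*a) * (d*b) * (a*e*c*d*c*b) := by exact congrArg (fun z => (d*c*b*a*e*d*c*d*b*b*c*a) * z * (a*e*c*d*c*b)) (cbd.eq)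
    _ = (d*c*b*a*e*d*c*d*b*b) * (c*a) * (d*b*a*e*c*d*c*b) := by group
    _ = (d*c*b*a*e*d*c*d*b*b) * (a*c) * (d*b*a*e*c*d*c*b) := by exact congrArg (fun z => (d*c*b*a*e*d*c*d*b*b) * z * (d*b*a*e*c*d*c*b)) ((cac.symm).eq)
    _ = (d*c*b*a*e*d*c) * (d*b) * (b*a*c*d*b*a*e*c*d*c*b) := by group
    _ = (d*c*b*a*e*d*c) * (b*d) * (b*a*c*d*b*a*e*c*d*c*b) := by exact congrArg (fun z => (d*c*b*a*e*d*c) * z * (b*a*c*d*b*a*e*c*d*c*b)) ((cbd.symm).eq)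
    _ = (d*c*b*a*e*d*c*b) * (d*b) * (a*c*d*b*a*e*c*d*c*b) := by group
    _ = (d*c*b*a*e*d*c*b) * (b*d) * (a*c*d*b*a*e*c*d*c*b) := by exact congrArg (fun z => (d*c*b*a*e*d*c*b) * z * (a*c*d*b*a*e*c*d*c*b)) ((cbd.symm).eq)
    _ = (d*c*b*a*e*d*c*b*b) * (d*a) * (c*d*b*a*e*c*d*c*b) := by group
    _ = (d*c*b*a*e*d*c*b*b) * (a*d) * (c*d*b*a*e*c*d*c*b) := by exact congrArg (fun z => (d*c*b*a*e*d*c*b*b) * z * (c*d*b*a*e*c*d*c*b)) ((cad.symm).eq)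
    _ = (d*c*b*a*e*d*c*b*b*a) * (d*c*d) * (b*a*e*c*d*c*b) := by group
    _ = (d*c*b*a*e*d*c*b*b*a) * (c*d*c) * (b*a*e*c*d*c*b) := by exact congrArg (fun z => (d*c*b*a*e*d*c*b*b*a) * z * (b*a*e*c*d*c*b)) (hcd.symm)
    _ = (d*c*b*a*e*d*c*b*b*a*c*d*c*b*a) * (e*c) * (d*c*b) := by group
    _ = (d*c*b*a*e*d*c*b*b*a*c*d*c*b*a) * (c*e) * (d*c*b) := by exact congrArg (fun z => (d*c*b*a*e*d*c*b*b*a*c*d*c*b*a) * z * (d*c*b)) ((cce.symm).eq)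
    _ = (d*c*b*a*e*d*c*b*b*a*c*d*c*b) * (a*c) * (e*d*c*b) := by group
    _ = (d*c*b*a*e*d*c*b*b*a*c*d*c*b) * (c*a) * (e*d*c*b) := by exact congrArg (fun z => (d*c*b*a*e*d*c*b*b*a*c*d*c*b) * z * (e*d*c*b)) (cac.eq)
    _ = (d*c*b*a*e*d*c*b*b*a*c*d) * (c*b*c) * (a*e*d*c*b) := by group
    _ = (d*c*b*a*e*d*c*b*b*a*c*d) * (b*c*b) * (a*e*d*c*b) := by exact congrArg (fun z => (d*c*b*a*e*d*c*b*b*a*c*d) * z * (a*e*d*c*b)) (hbc.symm)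
    _ = (d*c*b*a*e*d*c*b*b*a*c*d*b*c*b) * (a*e) * (d*c*b) := by group
    _ = (d*c*b*a*e*d*c*b*b*a*c*d*b*c*b) * (e*a) * (d*c*b) := by exact congrArg (fun z => (d*c*b*a*e*d*c*b*b*a*c*d*b*c*b) * z * (d*c*b)) (cae.eq)
    _ = (d*c*b*a*e*d*c*b*b*a*c*d*b*c*b*e) * (a*d) * (c*b) := by group
    _ = (d*c*b*a*e*d*c*b*b*a*c*d*b*c*b*e) * (d*a) * (c*b) := by exact congrArg (fun z => (d*c*b*a*e*d*c*b*b*a*c*d*b*c*b*e) * z * (c*b)) (cad.eq)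
    _ = (d*c*b*a*e*d*c*b*b*a*c*d*b*c) * (b*e) * (d*a*c*b) := by group
    _ = (d*c*b*a*e*d*c*b*b*a*c*d*b*c) * (e*b) * (d*a*c*b) := by exact congrArg (fun z => (d*c*b*a*e*d*c*b*b*a*c*d*b*c) * z * (d*a*c*b)) (cbe.eq)
    _ = (d*c*b*a*e*d*c*b*b*a*c*d*b*c*e) * (b*d) * (a*c*b) := by group
    _ = (d*c*b*a*e*d*c*b*b*a*c*d*b*c*e) * (d*b) * (a*c*b) := by exact congrArg (fun z => (d*c*b*a*e*d*c*b*b*a*c*d*b*c*e) * z * (a*c*b)) (cbd.eq)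
    _ = (d*c*b*a*e*d*c*b*b*a*c) * (d*b) * (c*e*d*b*a*c*b) := by group
    _ = (d*c*b*a*e*d*c*b*b*a*c) * (b*d) * (c*e*d*b*a*c*b) := by exact congrArg (fun z => (d*c*b*a*e*d*c*b*b*a*c) * z * (c*e*d*b*a*c*b)) ((cbd.symm).eq)
    _ = (d*c*b) * (a*e) * (d*c*b*b*a*c*b*d*c*e*d*b*a*c*b) := by group
    _ = (d*c*b) * (e*a) * (d*c*b*b*a*c*b*d*c*e*d*b*a*c*b) := by exact congrArg (fun z => (d*c*b) * z * (d*c*b*b*a*c*b*d*c*e*d*b*a*c*b)) (cae.eq)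
    _ = (d*c*b*e) * (a*d) * (c*b*b*a*c*b*d*c*e*d*b*a*c*b) := by group
    _ = (d*c*b*e) * (d*a) * (c*b*b*a*c*b*d*c*e*d*b*a*c*b) := by exact congrArg (fun z => (d*c*b*e) * z * (c*b*b*a*c*b*d*c*e*d*b*a*c*b)) (cad.eq)
    _ = (d*c) * (b*e) * (d*a*c*b*b*a*c*b*d*c*e*d*b*a*c*b) := by group
    _ = (d*c) * (e*b) * (d*a*c*b*b*a*c*b*d*c*e*d*b*a*c*b) := by exact congrArg (fun z => (d*c) * z * (d*a*c*b*b*a*c*b*d*c*e*d*b*a*c*b)) (cbe.eq)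
    _ = (d*c*e) * (b*d) * (a*c*b*b*a*c*b*d*c*e*d*b*a*c*b) := by group
    _ = (d*c*e) * (d*b) * (a*c*b*b*a*c*b*d*c*e*d*b*a*c*b) := by exact congrArg (fun z => (d*c*e) * z * (a*c*b*b*a*c*b*d*c*e*d*b*a*c*b)) (cbd.eq)
    _ = d*c*e*d*b*a*c*b*b*a*c*b*d*c*e*d*b*a*c*b := by group

set_option maxHeartbeats 1600000 in
lemma keyB (a b c d e : G)
    (hab : a*b*a = b*a*b) (hbc : b*c*b = c*b*c) (hcd : c*d*c = d*c*d) (hde : d*e*d = e*d*e)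
    (hac : Commute a c) (had : Commute a d) (hae : Commute a e)
    (hbd : Commute b d) (hbe : Commute b e) (hce : Commute c e) :
    b*c*c*b*d*c*e*d*b*a*c*b*b*a*c*b*d*c*e*d = d*c*e*d*b*a*c*b*b*a*c*b*d*c*e*d*b*c*c*b := by
  have cac := hac
  have cad := had
  have cae := hae
  have cbd := hbd
  have cbe := hbe
  have cce := hce
  calc b*c*c*b*d*c*e*d*b*a*c*b*b*a*c*b*d*c*e*d = (b*c*c) * (b*d) * (c*e*d*b*a*c*b*b*a*c*b*d*c*e*d) := by group
    _ = (b*c*c) * (d*b) * (c*e*d*b*a*c*b*b*a*c*b*d*c*e*d) := by exact congrArg (fun z => (b*c*c) * z * (c*e*d*b*a*c*b*b*a*c*b*d*c*e*d)) (cbd.eq)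
    _ = (b*c*c*d*b*c*e) * (d*b) * (a*c*b*b*a*c*b*d*c*e*d) := by group
    _ = (b*c*c*d*b*c*e) * (b*d) * (a*c*b*b*a*c*b*d*c*e*d) := by exact congrArg (fun z => (b*c*c*d*b*c*e) * z * (a*c*b*b*a*c*b*d*c*e*d)) ((cbd.symm).eq)
    _ = (b*c*c*d*b*c) * (e*b) * (d*a*c*b*b*a*c*b*d*c*e*d) := by group
    _ = (b*c*c*d*b*c) * (b*e) * (d*a*c*b*b*a*c*b*d*c*e*d) := by exact congrArg (fun z => (b*c*c*d*b*c) * z * (d*a*c*b*b*a*c*b*d*c*e*d)) ((cbe.symm).eq)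
    _ = (b*c*c*d*b*c*b*e*d) * (a*c) * (b*b*a*c*b*d*c*e*d) := by group
    _ = (b*c*c*d*b*c*b*e*d) * (c*a) * (b*b*a*c*b*d*c*e*d) := by exact congrArg (fun z => (b*c*c*d*b*c*b*e*d) * z * (b*b*a*c*b*d*c*e*d)) (cac.eq)
    _ = (b*c*c*d*b*c*b*e*d*c*a*b*b*a*c) * (b*d) * (c*e*d) := by group
    _ = (b*c*c*d*b*c*b*e*d*c*a*b*b*a*c) * (d*b) * (c*e*d) := by exact congrArg (fun z => (b*c*c*d*b*c*b*e*d*c*a*b*b*a*c) * z * (c*e*d)) (cbd.eq)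
    _ = (b*c*c*d*b*c*b*e*d*c*a*b*b*a*c*d*b) * (c*e) * (d) := by group
    _ = (b*c*c*d*b*c*b*e*d*c*a*b*b*a*c*d*b) * (e*c) * (d) := by exact congrArg (fun z => (b*c*c*d*b*c*b*e*d*c*a*b*b*a*c*d*b) * z * (d)) (cce.eq)
    _ = (b*c*c*d*b*c*b*e*d*c*a*b*b*a*c*d) * (b*e) * (c*d) := by group
    _ = (b*c*c*d*b*c*b*e*d*c*a*b*b*a*c*d) * (e*b) * (c*d) := by exact congrArg (fun z => (b*c*c*d*b*c*b*e*d*c*a*b*b*a*c*d) * z * (c*d)) (cbe.eq)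
    _ = (b*c*c*d) * (b*c*b) * (e*d*c*a*b*b*a*c*d*e*b*c*d) := by group
    _ = (b*c*c*d) * (c*b*c) * (e*d*c*a*b*b*a*c*d*e*b*c*d) := by exact congrArg (fun z => (b*c*c*d) * z * (e*d*c*a*b*b*a*c*d*e*b*c*d)) hbc
    _ = (b*c*c*d*c*b) * (c*e) * (d*c*a*b*b*a*c*d*e*b*c*d) := by group
    _ = (b*c*c*d*c*b) * (e*c) * (d*c*a*b*b*a*c*d*e*b*c*d) := by exact congrArg (fun z => (b*c*c*d*c*b) * z * (d*c*a*b*b*a*c*d*e*b*c*d)) (cce.eq)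
    _ = (b*c) * (c*d*c) * (b*e*c*d*c*a*b*b*a*c*d*e*b*c*d) := by group
    _ = (b*c) * (d*c*d) * (b*e*c*d*c*a*b*b*a*c*d*e*b*c*d) := by exact congrArg (fun z => (b*c) * z * (b*e*c*d*c*a*b*b*a*c*d*e*b*c*d)) hcd
    _ = (b*c*d*c) * (d*b) * (e*c*d*c*a*b*b*a*c*d*e*b*c*d) := by group
    _ = (b*c*d*c) * (b*d) * (e*c*d*c*a*b*b*a*c*d*e*b*c*d) := by exact congrArg (fun z => (b*c*d*c) * z * (e*c*d*c*a*b*b*a*c*d*e*b*c*d)) ((cbd.symm).eq)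
    _ = (b*c*d*c*b*d*e) * (c*d*c) * (a*b*b*a*c*d*e*b*c*d) := by group
    _ = (b*c*d*c*b*d*e) * (d*c*d) * (a*b*b*a*c*d*e*b*c*d) := by exact congrArg (fun z => (b*c*d*c*b*d*e) * z * (a*b*b*a*c*d*e*b*c*d)) hcd
    _ = (b*c*d*c*b*d*e*d*c) * (d*a) * (b*b*a*c*d*e*b*c*d) := by group
    _ = (b*c*d*c*b*d*e*d*c) * (a*d) * (b*b*a*c*d*e*b*c*d) := by exact congrArg (fun z => (b*c*d*c*b*d*e*d*c) * z * (b*b*a*c*d*e*b*c*d)) ((cad.symm).eq)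
    _ = (b*c*d*c*b*d*e*d*c*a) * (d*b) * (b*a*c*d*e*b*c*d) := by group
    _ = (b*c*d*c*b*d*e*d*c*a) * (b*d) * (b*a*c*d*e*b*c*d) := by exact congrArg (fun z => (b*c*d*c*b*d*e*d*c*a) * z * (b*a*c*d*e*b*c*d)) ((cbd.symm).eq)
    _ = (b*c*d*c*b*d*e*d*c*a*b) * (d*b) * (a*c*d*e*b*c*d) := by group
    _ = (b*c*d*c*b*d*e*d*c*a*b) * (b*d) * (a*c*d*e*b*c*d) := by exact congrArg (fun z => (b*c*d*c*b*d*e*d*c*a*b) * z * (a*c*d*e*b*c*d)) ((cbd.symm).eq)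
    _ = (b*c*d*c*b*d*e*d*c*a*b*b) * (d*a) * (c*d*e*b*c*d) := by group
    _ = (b*c*d*c*b*d*e*d*c*a*b*b) * (a*d) * (c*d*e*b*c*d) := by exact congrArg (fun z => (b*c*d*c*b*d*e*d*c*a*b*b) * z * (c*d*e*b*c*d)) ((cad.symm).eq)
    _ = (b*c*d*c*b) * (d*e*d) * (c*a*b*b*a*d*c*d*e*b*c*d) := by group
    _ = (b*c*d*c*b) * (e*d*e) * (c*a*b*b*a*d*c*d*e*b*c*d) := by exact congrArg (fun z => (b*c*d*c*b) * z * (c*a*b*b*a*d*c*d*e*b*c*d)) hde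
    _ = (b*c*d*c*b*e*d) * (e*c) * (a*b*b*a*d*c*d*e*b*c*d) := by group
    _ = (b*c*d*c*b*e*d) * (c*e) * (a*b*b*a*d*c*d*e*b*c*d) := by exact congrArg (fun z => (b*c*d*c*b*e*d) * z * (a*b*b*a*d*c*d*e*b*c*d)) ((cce.symm).eq)
    _ = (b*c*d*c*b*e*d*c) * (e*a) * (b*b*a*d*c*d*e*b*c*d) := by group
    _ = (b*c*d*c*b*e*d*c) * (a*e) * (b*b*a*d*c*d*e*b*c*d) := by exact congrArg (fun z => (b*c*d*c*b*e*d*c) * z * (b*b*a*d*c*d*e*b*c*d)) ((cae.symm).eq)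
    _ = (b*c*d*c*b*e*d*c*a) * (e*b) * (b*a*d*c*d*e*b*c*d) := by group
    _ = (b*c*d*c*b*e*d*c*a) * (b*e) * (b*a*d*c*d*e*b*c*d) := by exact congrArg (fun z => (b*c*d*c*b*e*d*c*a) * z * (b*a*d*c*d*e*b*c*d)) ((cbe.symm).eq)
    _ = (b*c*d*c*b*e*d*c*a*b) * (e*b) * (a*d*c*d*e*b*c*d) := by group
    _ = (b*c*d*c*b*e*d*c*a*b) * (b*e) * (a*d*c*d*e*b*c*d) := by exact congrArg (fun z => (b*c*d*c*b*e*d*c*a*b) * z * (a*d*c*d*e*b*c*d)) ((cbe.symm).eq)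
    _ = (b*c*d*c*b*e*d*c*a*b*b) * (e*a) * (d*c*d*e*b*c*d) := by group
    _ = (b*c*d*c*b*e*d*c*a*b*b) * (a*e) * (d*c*d*e*b*c*d) := by exact congrArg (fun z => (b*c*d*c*b*e*d*c*a*b*b) * z * (d*c*d*e*b*c*d)) ((cae.symm).eq)
    _ = (b*c*d*c*b*e*d*c*a*b*b*a*e) * (d*c*d) * (e*b*c*d) := by group
    _ = (b*c*d*c*b*e*d*c*a*b*b*a*e) * (c*d*c) * (e*b*c*d) := by exact congrArg (fun z => (b*c*d*c*b*e*d*c*a*b*b*a*e) * z * (e*b*c*d)) (hcd.symm)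
    _ = (b*c*d*c*b*e*d*c*a*b*b*a) * (e*c) * (d*c*e*b*c*d) := by group
    _ = (b*c*d*c*b*e*d*c*a*b*b*a) * (c*e) * (d*c*e*b*c*d) := by exact congrArg (fun z => (b*c*d*c*b*e*d*c*a*b*b*a) * z * (d*c*e*b*c*d)) ((cce.symm).eq)
    _ = (b*c*d*c*b*e*d*c*a*b*b*a*c*e*d) * (c*e) * (b*c*d) := by group
    _ = (b*c*d*c*b*e*d*c*a*b*b*a*c*e*d) * (e*c) * (b*c*d) := by exact congrArg (fun z => (b*c*d*c*b*e*d*c*a*b*b*a*c*e*d) * z * (b*c*d)) (cce.eq)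
    _ = (b*c*d*c*b*e*d*c*a*b*b*a*c) * (e*d*e) * (c*b*c*d) := by group
    _ = (b*c*d*c*b*e*d*c*a*b*b*a*c) * (d*e*d) * (c*b*c*d) := by exact congrArg (fun z => (b*c*d*c*b*e*d*c*a*b*b*a*c) * z * (c*b*c*d)) (hde.symm)
    _ = (b*c*d*c*b*e*d*c*a*b*b*a*c*d*e*d) * (c*b*c) * (d) := by group
    _ = (b*c*d*c*b*e*d*c*a*b*b*a*c*d*e*d) * (b*c*b) * (d) := by exact congrArg (fun z => (b*c*d*c*b*e*d*c*a*b*b*a*c*d*e*d) * z * (d)) (hbc.symm)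
    _ = (b*c*d*c*b*e*d*c*a*b*b*a*c*d*e) * (d*b) * (c*b*d) := by group
    _ = (b*c*d*c*b*e*d*c*a*b*b*a*c*d*e) * (b*d) * (c*b*d) := by exact congrArg (fun z => (b*c*d*c*b*e*d*c*a*b*b*a*c*d*e) * z * (c*b*d)) ((cbd.symm).eq)
    _ = (b*c*d*c*b*e*d*c*a*b*b*a*c*d*e*b*d*c) * (b*d) := by group
    _ = (b*c*d*c*b*e*d*c*a*b*b*a*c*d*e*b*d*c) * (d*b) := by exact congrArg (fun z => (b*c*d*c*b*e*d*c*a*b*b*a*c*d*e*b*d*c) * z) (cbd.eq)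
    _ = (b*c*d*c*b*e*d*c*a*b*b*a*c*d*e*b) * (d*c*d) * (b) := by group
    _ = (b*c*d*c*b*e*d*c*a*b*b*a*c*d*e*b) * (c*d*c) * (b) := by exact congrArg (fun z => (b*c*d*c*b*e*d*c*a*b*b*a*c*d*e*b) * z * (b)) (hcd.symm)
    _ = (b) * (c*d*c) * (b*e*d*c*a*b*b*a*c*d*e*b*c*d*c*b) := by group
    _ = (b) * (d*c*d) * (b*e*d*c*a*b*b*a*c*d*e*b*c*d*c*b) := by exact congrArg (fun z => (b) * z * (b*e*d*c*a*b*b*a*c*d*e*b*c*d*c*b)) hcd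
    _ = (b*d*c) * (d*b) * (e*d*c*a*b*b*a*c*d*e*b*c*d*c*b) := by group
    _ = (b*d*c) * (b*d) * (e*d*c*a*b*b*a*c*d*e*b*c*d*c*b) := by exact congrArg (fun z => (b*d*c) * z * (e*d*c*a*b*b*a*c*d*e*b*c*d*c*b)) ((cbd.symm).eq)
    _ = (b*d*c*b) * (d*e*d) * (c*a*b*b*a*c*d*e*b*c*d*c*b) := by group
    _ = (b*d*c*b) * (e*d*e) * (c*a*b*b*a*c*d*e*b*c*d*c*b) := by exact congrArg (fun z => (b*d*c*b) * z * (c*a*b*b*a*c*d*e*b*c*d*c*b)) hde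
    _ = (b*d*c*b*e*d) * (e*c) * (a*b*b*a*c*d*e*b*c*d*c*b) := by group
    _ = (b*d*c*b*e*d) * (c*e) * (a*b*b*a*c*d*e*b*c*d*c*b) := by exact congrArg (fun z => (b*d*c*b*e*d) * z * (a*b*b*a*c*d*e*b*c*d*c*b)) ((cce.symm).eq)
    _ = (b*d*c*b*e*d*c) * (e*a) * (b*b*a*c*d*e*b*c*d*c*b) := by group
    _ = (b*d*c*b*e*d*c) * (a*e) * (b*b*a*c*d*e*b*c*d*c*b) := by exact congrArg (fun z => (b*d*c*b*e*d*c) * z * (b*b*a*c*d*e*b*c*d*c*b)) ((cae.symm).eq)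
    _ = (b*d*c*b*e*d*c*a) * (e*b) * (b*a*c*d*e*b*c*d*c*b) := by group
    _ = (b*d*c*b*e*d*c*a) * (b*e) * (b*a*c*d*e*b*c*d*c*b) := by exact congrArg (fun z => (b*d*c*b*e*d*c*a) * z * (b*a*c*d*e*b*c*d*c*b)) ((cbe.symm).eq)
    _ = (b*d*c*b*e*d*c*a*b) * (e*b) * (a*c*d*e*b*c*d*c*b) := by group
    _ = (b*d*c*b*e*d*c*a*b) * (b*e) * (a*c*d*e*b*c*d*c*b) := by exact congrArg (fun z => (b*d*c*b*e*d*c*a*b) * z * (a*c*d*e*b*c*d*c*b)) ((cbe.symm).eq)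
    _ = (b*d*c*b*e*d*c*a*b*b) * (e*a) * (c*d*e*b*c*d*c*b) := by group
    _ = (b*d*c*b*e*d*c*a*b*b) * (a*e) * (c*d*e*b*c*d*c*b) := by exact congrArg (fun z => (b*d*c*b*e*d*c*a*b*b) * z * (c*d*e*b*c*d*c*b)) ((cae.symm).eq)
    _ = (b*d*c*b*e*d*c*a*b*b*a) * (e*c) * (d*e*b*c*d*c*b) := by group
    _ = (b*d*c*b*e*d*c*a*b*b*a) * (c*e) * (d*e*b*c*d*c*b) := by exact congrArg (fun z => (b*d*c*b*e*d*c*a*b*b*a) * z * (d*e*b*c*d*c*b)) ((cce.symm).eq)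
    _ = (b*d*c*b*e*d*c*a*b*b*a*c) * (e*d*e) * (b*c*d*c*b) := by group
    _ = (b*d*c*b*e*d*c*a*b*b*a*c) * (d*e*d) * (b*c*d*c*b) := by exact congrArg (fun z => (b*d*c*b*e*d*c*a*b*b*a*c) * z * (b*c*d*c*b)) (hde.symm)
    _ = (b*d*c*b*e*d*c*a*b*b*a*c*d*e) * (d*b) * (c*d*c*b) := by group
    _ = (b*d*c*b*e*d*c*a*b*b*a*c*d*e) * (b*d) * (c*d*c*b) := by exact congrArg (fun z => (b*d*c*b*e*d*c*a*b*b*a*c*d*e) * z * (c*d*c*b)) ((cbd.symm).eq)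
    _ = (b*d*c*b*e*d*c*a*b*b*a*c*d*e*b) * (d*c*d) * (c*b) := by group
    _ = (b*d*c*b*e*d*c*a*b*b*a*c*d*e*b) * (c*d*c) * (c*b) := by exact congrArg (fun z => (b*d*c*b*e*d*c*a*b*b*a*c*d*e*b) * z * (c*b)) (hcd.symm)
    _ = (b*d) * (c*b*e*d*c*a*b*b*a*c*d*e*b*c*d*c*c*b) := by group
    _ = (d*b) * (c*b*e*d*c*a*b*b*a*c*d*e*b*c*d*c*c*b) := by exact congrArg (fun z => z * (c*b*e*d*c*a*b*b*a*c*d*e*b*c*d*c*c*b)) (cbd.eq)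
    _ = (d) * (b*c*b) * (e*d*c*a*b*b*a*c*d*e*b*c*d*c*c*b) := by group
    _ = (d) * (c*b*c) * (e*d*c*a*b*b*a*c*d*e*b*c*d*c*c*b) := by exact congrArg (fun z => (d) * z * (e*d*c*a*b*b*a*c*d*e*b*c*d*c*c*b)) hbc
    _ = (d*c*b) * (c*e) * (d*c*a*b*b*a*c*d*e*b*c*d*c*c*b) := by group
    _ = (d*c*b) * (e*c) * (d*c*a*b*b*a*c*d*e*b*c*d*c*c*b) := by exact congrArg (fun z => (d*c*b) * z * (d*c*a*b*b*a*c*d*e*b*c*d*c*c*b)) (cce.eq)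
    _ = (d*c*b*e) * (c*d*c) * (a*b*b*a*c*d*e*b*c*d*c*c*b) := by group
    _ = (d*c*b*e) * (d*c*d) * (a*b*b*a*c*d*e*b*c*d*c*c*b) := by exact congrArg (fun z => (d*c*b*e) * z * (a*b*b*a*c*d*e*b*c*d*c*c*b)) hcd
    _ = (d*c*b*e*d*c) * (d*a) * (b*b*a*c*d*e*b*c*d*c*c*b) := by group
    _ = (d*c*b*e*d*c) * (a*d) * (b*b*a*c*d*e*b*c*d*c*c*b) := by exact congrArg (fun z => (d*c*b*e*d*c) * z * (b*b*a*c*d*e*b*c*d*c*c*b)) ((cad.symm).eq)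
    _ = (d*c*b*e*d*c*a) * (d*b) * (b*a*c*d*e*b*c*d*c*c*b) := by group
    _ = (d*c*b*e*d*c*a) * (b*d) * (b*a*c*d*e*b*c*d*c*c*b) := by exact congrArg (fun z => (d*c*b*e*d*c*a) * z * (b*a*c*d*e*b*c*d*c*c*b)) ((cbd.symm).eq)
    _ = (d*c*b*e*d*c*a*b) * (d*b) * (a*c*d*e*b*c*d*c*c*b) := by group
    _ = (d*c*b*e*d*c*a*b) * (b*d) * (a*c*d*e*b*c*d*c*c*b) := by exact congrArg (fun z => (d*c*b*e*d*c*a*b) * z * (a*c*d*e*b*c*d*c*c*b)) ((cbd.symm).eq)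
    _ = (d*c*b*e*d*c*a*b*b) * (d*a) * (c*d*e*b*c*d*c*c*b) := by group
    _ = (d*c*b*e*d*c*a*b*b) * (a*d) * (c*d*e*b*c*d*c*c*b) := by exact congrArg (fun z => (d*c*b*e*d*c*a*b*b) * z * (c*d*e*b*c*d*c*c*b)) ((cad.symm).eq)
    _ = (d*c*b*e*d*c*a*b*b*a) * (d*c*d) * (e*b*c*d*c*c*b) := by group
    _ = (d*c*b*e*d*c*a*b*b*a) * (c*d*c) * (e*b*c*d*c*c*b) := by exact congrArg (fun z => (d*c*b*e*d*c*a*b*b*a) * z * (e*b*c*d*c*c*b)) (hcd.symm)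
    _ = (d*c*b*e*d*c*a*b*b*a*c*d) * (c*e) * (b*c*d*c*c*b) := by group
    _ = (d*c*b*e*d*c*a*b*b*a*c*d) * (e*c) * (b*c*d*c*c*b) := by exact congrArg (fun z => (d*c*b*e*d*c*a*b*b*a*c*d) * z * (b*c*d*c*c*b)) (cce.eq)
    _ = (d*c*b*e*d*c*a*b*b*a*c*d*e) * (c*b*c) * (d*c*c*b) := by group
    _ = (d*c*b*e*d*c*a*b*b*a*c*d*e) * (b*c*b) * (d*c*c*b) := by exact congrArg (fun z => (d*c*b*e*d*c*a*b*b*a*c*d*e) * z * (d*c*c*b)) (hbc.symm)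
    _ = (d*c*b*e*d*c*a*b*b*a*c*d*e*b*c) * (b*d) * (c*c*b) := by group
    _ = (d*c*b*e*d*c*a*b*b*a*c*d*e*b*c) * (d*b) * (c*c*b) := by exact congrArg (fun z => (d*c*b*e*d*c*a*b*b*a*c*d*e*b*c) * z * (c*c*b)) (cbd.eq)
    _ = (d*c*b*e*d*c*a*b*b*a*c*d) * (e*b) * (c*d*b*c*c*b) := by group
    _ = (d*c*b*e*d*c*a*b*b*a*c*d) * (b*e) * (c*d*b*c*c*b) := by exact congrArg (fun z => (d*c*b*e*d*c*a*b*b*a*c*d) * z * (c*d*b*c*c*b)) ((cbe.symm).eq)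
    _ = (d*c*b*e*d*c*a*b*b*a*c*d*b) * (e*c) * (d*b*c*c*b) := by group
    _ = (d*c*b*e*d*c*a*b*b*a*c*d*b) * (c*e) * (d*b*c*c*b) := by exact congrArg (fun z => (d*c*b*e*d*c*a*b*b*a*c*d*b) * z * (d*b*c*c*b)) ((cce.symm).eq)
    _ = (d*c*b*e*d*c*a*b*b*a*c) * (d*b) * (c*e*d*b*c*c*b) := by group
    _ = (d*c*b*e*d*c*a*b*b*a*c) * (b*d) * (c*e*d*b*c*c*b) := by exact congrArg (fun z => (d*c*b*e*d*c*a*b*b*a*c) * z * (c*e*d*b*c*c*b)) ((cbd.symm).eq)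
    _ = (d*c*b*e*d) * (c*a) * (b*b*a*c*b*d*c*e*d*b*c*c*b) := by group
    _ = (d*c*b*e*d) * (a*c) * (b*b*a*c*b*d*c*e*d*b*c*c*b) := by exact congrArg (fun z => (d*c*b*e*d) * z * (b*b*a*c*b*d*c*e*d*b*c*c*b)) ((cac.symm).eq)
    _ = (d*c) * (b*e) * (d*a*c*b*b*a*c*b*d*c*e*d*b*c*c*b) := by group
    _ = (d*c) * (e*b) * (d*a*c*b*b*a*c*b*d*c*e*d*b*c*c*b) := by exact congrArg (fun z => (d*c) * z * (d*a*c*b*b*a*c*b*d*c*e*d*b*c*c*b)) (cbe.eq)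
    _ = (d*c*e) * (b*d) * (a*c*b*b*a*c*b*d*c*e*d*b*c*c*b) := by group
    _ = (d*c*e) * (d*b) * (a*c*b*b*a*c*b*d*c*e*d*b*c*c*b) := by exact congrArg (fun z => (d*c*e) * z * (a*c*b*b*a*c*b*d*c*e*d*b*c*c*b)) (cbd.eq)
    _ = d*c*e*d*b*a*c*b*b*a*c*b*d*c*e*d*b*c*c*b := by group

set_option maxHeartbeats 800000 in
lemma key (a b c d e : G)
    (hab : a*b*a = b*a*b) (hbc : b*c*b = c*b*c) (hcd : c*d*c = d*c*d) (hde : d*e*d = e*d*e)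
    (hac : Commute a c) (had : Commute a d) (hae : Commute a e)
    (hbd : Commute b d) (hbe : Commute b e) (hce : Commute c e) :
    (b*a*c⁻¹*b⁻¹) * (d*c*e*d*b*a*c*b*b*a*c*b*d*c*e*d) * (b*a*c⁻¹*b⁻¹)⁻¹ = d*c*e*d*b*a*c*b*b*a*c*b*d*c*e*d := by
  have hA := keyA a b c d e hab hbc hcd hde hac had hae hbd hbe hce
  have hB := keyB a b c d e hab hbc hcd hde hac had hae hbd hbe hce
  calc (b*a*c⁻¹*b⁻¹) * (d*c*e*d*b*a*c*b*b*a*c*b*d*c*e*d) * (b*a*c⁻¹*b⁻¹)⁻¹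
      = (b*a*c*b*b⁻¹*c⁻¹*c⁻¹*b⁻¹) * (d*c*e*d*b*a*c*b*b*a*c*b*d*c*e*d*b*c*c*b) * (b⁻¹*c⁻¹*a⁻¹*b⁻¹) := by group
    _ = (b*a*c*b*b⁻¹*c⁻¹*c⁻¹*b⁻¹) * (b*c*c*b*d*c*e*d*b*a*c*b*b*a*c*b*d*c*e*d) * (b⁻¹*c⁻¹*a⁻¹*b⁻¹) := by
        exact congrArg (fun z => (b*a*c*b*b⁻¹*c⁻¹*c⁻¹*b⁻¹) * z * (b⁻¹*c⁻¹*a⁻¹*b⁻¹)) hB.symm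
    _ = (b*a*c*b*d*c*e*d*b*a*c*b*b*a*c*b*d*c*e*d) * (b⁻¹*c⁻¹*a⁻¹*b⁻¹) := by group
    _ = (d*c*e*d*b*a*c*b*b*a*c*b*d*c*e*d*b*a*c*b) * (b⁻¹*c⁻¹*a⁻¹*b⁻¹) := by
        exact congrArg (fun z => z * (b⁻¹*c⁻¹*a⁻¹*b⁻¹)) hA
    _ = d*c*e*d*b*a*c*b*b*a*c*b*d*c*e*d := by group

end Key


theorem stmt8 (n : ℕ) (hn : 3 ≤ n) :
    (br1 : BraidGroup (2 * n - 1)) * (bs 2 * bs 1 * bs 1 * bs 2) * br1⁻¹ =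
      bs 2 * bs 1 * bs 1 * bs 2 := by
  have hb1 : (bσ 1 : BraidGroup (2*n-1)) * bσ 2 * bσ 1 = bσ 2 * bσ 1 * bσ 2 := by
    have h := bσ_braid (m := 2*n-1) 1 (by norm_num) (by omega); norm_num at h; exact h
  have hb2 : (bσ 2 : BraidGroup (2*n-1)) * bσ 3 * bσ 2 = bσ 3 * bσ 2 * bσ 3 := by
    have h := bσ_braid (m := 2*n-1) 2 (by norm_num) (by omega); norm_num at h; exact h
  have hb3 : (bσ 3 : BraidGroup (2*n-1)) * bσ 4 * bσ 3 = bσ 4 * bσ 3 * bσ 4 := by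
    have h := bσ_braid (m := 2*n-1) 3 (by norm_num) (by omega); norm_num at h; exact h
  have hb4 : (bσ 4 : BraidGroup (2*n-1)) * bσ 5 * bσ 4 = bσ 5 * bσ 4 * bσ 5 := by
    have h := bσ_braid (m := 2*n-1) 4 (by norm_num) (by omega); norm_num at h; exact h
  have hkey := key (bσ 1 : BraidGroup (2*n-1)) (bσ 2) (bσ 3) (bσ 4) (bσ 5)
    hb1 hb2 hb3 hb4
    (bσ_comm 1 3 (by norm_num) (by norm_num) (by omega))
    (bσ_comm 1 4 (by norm_num) (by norm_num) (by omega))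
    (bσ_comm 1 5 (by norm_num) (by norm_num) (by omega))
    (bσ_comm 2 4 (by norm_num) (by norm_num) (by omega))
    (bσ_comm 2 5 (by norm_num) (by norm_num) (by omega))
    (bσ_comm 3 5 (by norm_num) (by norm_num) (by omega))
  simp only [br1, bs]
  norm_num
  refine Eq.trans ?_ (Eq.trans hkey ?_) <;> group
end

section
/- In the braid group B_{2n} (n ≥ 2), the elements s_i = σ_{2i} σ_{2i−1} σ_{2i+1} σ_{2i} satisfy the braid relations: s_i s_j = s_j s_i for |i−j| > 1 and s_i s_j s_i = s_j s_i s_j for |i−j| = 1, for 1 ≤ i, j < n. -/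
private lemma cstep {G : Type*} [Group G] {x y : G} (h : x*y = y*x) (t : G) :
    x*(y*t) = y*(x*t) := by rw [← mul_assoc, h, mul_assoc]
private lemma bstep {G : Type*} [Group G] {x y : G} (h : x*y*x = y*x*y) (t : G) :
    x*(y*(x*t)) = y*(x*(y*t)) := by rw [← mul_assoc, ← mul_assoc, h, mul_assoc, mul_assoc]
private lemma bend {G : Type*} [Group G] {x y : G} (h : x*y*x = y*x*y) :
    x*(y*x) = y*(x*y) := by rw [← mul_assoc, h, mul_assoc]

lemma cable_braid {G : Type*} [Group G] (g1 g2 g3 g4 g5 : G)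
    (h12 : g1*g2*g1 = g2*g1*g2) (h23 : g2*g3*g2 = g3*g2*g3)
    (h34 : g3*g4*g3 = g4*g3*g4) (h45 : g4*g5*g4 = g5*g4*g5)
    (h13 : g1*g3 = g3*g1) (h14 : g1*g4 = g4*g1) (h15 : g1*g5 = g5*g1)
    (h24 : g2*g4 = g4*g2) (h25 : g2*g5 = g5*g2) (h35 : g3*g5 = g5*g3) :
    g2*(g1*(g3*(g2*(g4*(g3*(g5*(g4*(g2*(g1*(g3*g2)))))))))) =
    g4*(g3*(g5*(g4*(g2*(g1*(g3*(g2*(g4*(g3*(g5*g4)))))))))) := by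
  calc g2 * (g1 * (g3 * (g2 * (g4 * (g3 * (g5 * (g4 * (g2 * (g1 * (g3 * g2))))))))))
    _ = g2 * (g1 * (g3 * (g4 * (g2 * (g3 * (g5 * (g4 * (g2 * (g1 * (g3 * g2)))))))))) := congrArg (fun z => g2 * z) (congrArg (fun z => g1 * z) (congrArg (fun z => g3 * z) (cstep h24 _)))
    _ = g2 * (g1 * (g3 * (g4 * (g2 * (g3 * (g5 * (g2 * (g4 * (g1 * (g3 * g2)))))))))) := congrArg (fun z => g2 * z) (congrArg (fun z => g1 * z) (congrArg (fun z => g3 * z) (congrArg (fun z => g4 * z) (congrArg (fun z => g2 * z) (congrArg (fun z => g3 * z) (congrArg (fun z => g5 * z) (cstep (h24).symm _)))))))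
    _ = g2 * (g1 * (g3 * (g4 * (g2 * (g3 * (g2 * (g5 * (g4 * (g1 * (g3 * g2)))))))))) := congrArg (fun z => g2 * z) (congrArg (fun z => g1 * z) (congrArg (fun z => g3 * z) (congrArg (fun z => g4 * z) (congrArg (fun z => g2 * z) (congrArg (fun z => g3 * z) (cstep (h25).symm _))))))
    _ = g2 * (g1 * (g3 * (g4 * (g2 * (g3 * (g2 * (g5 * (g1 * (g4 * (g3 * g2)))))))))) := congrArg (fun z => g2 * z) (congrArg (fun z => g1 * z) (congrArg (fun z => g3 * z) (congrArg (fun z => g4 * z) (congrArg (fun z => g2 * z) (congrArg (fun z => g3 * z) (congrArg (fun z => g2 * z) (congrArg (fun z => g5 * z) (cstep (h14).symm _))))))))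
    _ = g2 * (g1 * (g3 * (g4 * (g2 * (g3 * (g2 * (g1 * (g5 * (g4 * (g3 * g2)))))))))) := congrArg (fun z => g2 * z) (congrArg (fun z => g1 * z) (congrArg (fun z => g3 * z) (congrArg (fun z => g4 * z) (congrArg (fun z => g2 * z) (congrArg (fun z => g3 * z) (congrArg (fun z => g2 * z) (cstep (h15).symm _)))))))
    _ = g2 * (g1 * (g3 * (g4 * (g3 * (g2 * (g3 * (g1 * (g5 * (g4 * (g3 * g2)))))))))) := congrArg (fun z => g2 * z) (congrArg (fun z => g1 * z) (congrArg (fun z => g3 * z) (congrArg (fun z => g4 * z) (bstep h23 _))))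
    _ = g2 * (g1 * (g3 * (g4 * (g3 * (g2 * (g1 * (g3 * (g5 * (g4 * (g3 * g2)))))))))) := congrArg (fun z => g2 * z) (congrArg (fun z => g1 * z) (congrArg (fun z => g3 * z) (congrArg (fun z => g4 * z) (congrArg (fun z => g3 * z) (congrArg (fun z => g2 * z) (cstep (h13).symm _))))))
    _ = g2 * (g1 * (g3 * (g4 * (g3 * (g2 * (g1 * (g5 * (g3 * (g4 * (g3 * g2)))))))))) := congrArg (fun z => g2 * z) (congrArg (fun z => g1 * z) (congrArg (fun z => g3 * z) (congrArg (fun z => g4 * z) (congrArg (fun z => g3 * z) (congrArg (fun z => g2 * z) (congrArg (fun z => g1 * z) (cstep h35 _)))))))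
    _ = g2 * (g1 * (g4 * (g3 * (g4 * (g2 * (g1 * (g5 * (g3 * (g4 * (g3 * g2)))))))))) := congrArg (fun z => g2 * z) (congrArg (fun z => g1 * z) (bstep h34 _))
    _ = g2 * (g4 * (g1 * (g3 * (g4 * (g2 * (g1 * (g5 * (g3 * (g4 * (g3 * g2)))))))))) := congrArg (fun z => g2 * z) (cstep h14 _)
    _ = g2 * (g4 * (g3 * (g1 * (g4 * (g2 * (g1 * (g5 * (g3 * (g4 * (g3 * g2)))))))))) := congrArg (fun z => g2 * z) (congrArg (fun z => g4 * z) (cstep h13 _))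
    _ = g2 * (g4 * (g3 * (g1 * (g2 * (g4 * (g1 * (g5 * (g3 * (g4 * (g3 * g2)))))))))) := congrArg (fun z => g2 * z) (congrArg (fun z => g4 * z) (congrArg (fun z => g3 * z) (congrArg (fun z => g1 * z) (cstep (h24).symm _))))
    _ = g2 * (g4 * (g3 * (g1 * (g2 * (g1 * (g4 * (g5 * (g3 * (g4 * (g3 * g2)))))))))) := congrArg (fun z => g2 * z) (congrArg (fun z => g4 * z) (congrArg (fun z => g3 * z) (congrArg (fun z => g1 * z) (congrArg (fun z => g2 * z) (cstep (h14).symm _)))))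
    _ = g2 * (g4 * (g3 * (g2 * (g1 * (g2 * (g4 * (g5 * (g3 * (g4 * (g3 * g2)))))))))) := congrArg (fun z => g2 * z) (congrArg (fun z => g4 * z) (congrArg (fun z => g3 * z) (bstep h12 _)))
    _ = g2 * (g4 * (g3 * (g2 * (g1 * (g2 * (g4 * (g5 * (g4 * (g3 * (g4 * g2)))))))))) := congrArg (fun z => g2 * z) (congrArg (fun z => g4 * z) (congrArg (fun z => g3 * z) (congrArg (fun z => g2 * z) (congrArg (fun z => g1 * z) (congrArg (fun z => g2 * z) (congrArg (fun z => g4 * z) (congrArg (fun z => g5 * z) (bstep h34 _))))))))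
    _ = g2 * (g4 * (g3 * (g2 * (g1 * (g2 * (g5 * (g4 * (g5 * (g3 * (g4 * g2)))))))))) := congrArg (fun z => g2 * z) (congrArg (fun z => g4 * z) (congrArg (fun z => g3 * z) (congrArg (fun z => g2 * z) (congrArg (fun z => g1 * z) (congrArg (fun z => g2 * z) (bstep h45 _))))))
    _ = g2 * (g4 * (g3 * (g2 * (g1 * (g2 * (g5 * (g4 * (g5 * (g3 * (g2 * g4)))))))))) := congrArg (fun z => g2 * z) (congrArg (fun z => g4 * z) (congrArg (fun z => g3 * z) (congrArg (fun z => g2 * z) (congrArg (fun z => g1 * z) (congrArg (fun z => g2 * z) (congrArg (fun z => g5 * z) (congrArg (fun z => g4 * z) (congrArg (fun z => g5 * z) (congrArg (fun z => g3 * z) ((h24).symm))))))))))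
    _ = g2 * (g4 * (g3 * (g2 * (g1 * (g2 * (g5 * (g4 * (g3 * (g5 * (g2 * g4)))))))))) := congrArg (fun z => g2 * z) (congrArg (fun z => g4 * z) (congrArg (fun z => g3 * z) (congrArg (fun z => g2 * z) (congrArg (fun z => g1 * z) (congrArg (fun z => g2 * z) (congrArg (fun z => g5 * z) (congrArg (fun z => g4 * z) (cstep (h35).symm _))))))))
    _ = g2 * (g4 * (g3 * (g2 * (g1 * (g2 * (g5 * (g4 * (g3 * (g2 * (g5 * g4)))))))))) := congrArg (fun z => g2 * z) (congrArg (fun z => g4 * z) (congrArg (fun z => g3 * z) (congrArg (fun z => g2 * z) (congrArg (fun z => g1 * z) (congrArg (fun z => g2 * z) (congrArg (fun z => g5 * z) (congrArg (fun z => g4 * z) (congrArg (fun z => g3 * z) (cstep (h25).symm _)))))))))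
    _ = g2 * (g4 * (g3 * (g2 * (g1 * (g5 * (g2 * (g4 * (g3 * (g2 * (g5 * g4)))))))))) := congrArg (fun z => g2 * z) (congrArg (fun z => g4 * z) (congrArg (fun z => g3 * z) (congrArg (fun z => g2 * z) (congrArg (fun z => g1 * z) (cstep h25 _)))))
    _ = g2 * (g4 * (g3 * (g2 * (g1 * (g5 * (g4 * (g2 * (g3 * (g2 * (g5 * g4)))))))))) := congrArg (fun z => g2 * z) (congrArg (fun z => g4 * z) (congrArg (fun z => g3 * z) (congrArg (fun z => g2 * z) (congrArg (fun z => g1 * z) (congrArg (fun z => g5 * z) (cstep h24 _))))))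
    _ = g2 * (g4 * (g3 * (g2 * (g1 * (g5 * (g4 * (g3 * (g2 * (g3 * (g5 * g4)))))))))) := congrArg (fun z => g2 * z) (congrArg (fun z => g4 * z) (congrArg (fun z => g3 * z) (congrArg (fun z => g2 * z) (congrArg (fun z => g1 * z) (congrArg (fun z => g5 * z) (congrArg (fun z => g4 * z) (bstep h23 _)))))))
    _ = g4 * (g2 * (g3 * (g2 * (g1 * (g5 * (g4 * (g3 * (g2 * (g3 * (g5 * g4)))))))))) := cstep h24 _
    _ = g4 * (g3 * (g2 * (g3 * (g1 * (g5 * (g4 * (g3 * (g2 * (g3 * (g5 * g4)))))))))) := congrArg (fun z => g4 * z) (bstep h23 _)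
    _ = g4 * (g3 * (g2 * (g1 * (g3 * (g5 * (g4 * (g3 * (g2 * (g3 * (g5 * g4)))))))))) := congrArg (fun z => g4 * z) (congrArg (fun z => g3 * z) (congrArg (fun z => g2 * z) (cstep (h13).symm _)))
    _ = g4 * (g3 * (g2 * (g1 * (g5 * (g3 * (g4 * (g3 * (g2 * (g3 * (g5 * g4)))))))))) := congrArg (fun z => g4 * z) (congrArg (fun z => g3 * z) (congrArg (fun z => g2 * z) (congrArg (fun z => g1 * z) (cstep h35 _))))
    _ = g4 * (g3 * (g2 * (g1 * (g5 * (g4 * (g3 * (g4 * (g2 * (g3 * (g5 * g4)))))))))) := congrArg (fun z => g4 * z) (congrArg (fun z => g3 * z) (congrArg (fun z => g2 * z) (congrArg (fun z => g1 * z) (congrArg (fun z => g5 * z) (bstep h34 _)))))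
    _ = g4 * (g3 * (g2 * (g1 * (g5 * (g4 * (g3 * (g2 * (g4 * (g3 * (g5 * g4)))))))))) := congrArg (fun z => g4 * z) (congrArg (fun z => g3 * z) (congrArg (fun z => g2 * z) (congrArg (fun z => g1 * z) (congrArg (fun z => g5 * z) (congrArg (fun z => g4 * z) (congrArg (fun z => g3 * z) (cstep (h24).symm _)))))))
    _ = g4 * (g3 * (g2 * (g5 * (g1 * (g4 * (g3 * (g2 * (g4 * (g3 * (g5 * g4)))))))))) := congrArg (fun z => g4 * z) (congrArg (fun z => g3 * z) (congrArg (fun z => g2 * z) (cstep h15 _)))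
    _ = g4 * (g3 * (g2 * (g5 * (g4 * (g1 * (g3 * (g2 * (g4 * (g3 * (g5 * g4)))))))))) := congrArg (fun z => g4 * z) (congrArg (fun z => g3 * z) (congrArg (fun z => g2 * z) (congrArg (fun z => g5 * z) (cstep h14 _))))
    _ = g4 * (g3 * (g5 * (g2 * (g4 * (g1 * (g3 * (g2 * (g4 * (g3 * (g5 * g4)))))))))) := congrArg (fun z => g4 * z) (congrArg (fun z => g3 * z) (cstep h25 _))
    _ = g4 * (g3 * (g5 * (g4 * (g2 * (g1 * (g3 * (g2 * (g4 * (g3 * (g5 * g4)))))))))) := congrArg (fun z => g4 * z) (congrArg (fun z => g3 * z) (congrArg (fun z => g5 * z) (cstep h24 _)))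


lemma braid_rel_eq_one {m : ℕ} {r : FreeGroup (Fin m)} (h : r ∈ braidRels m) :
    (QuotientGroup.mk r : PresentedGroup (braidRels m)) = 1 :=
  (QuotientGroup.eq_one_iff r).mpr (Subgroup.subset_normalClosure h)

lemma of_comm {m : ℕ} (i j : Fin m) (h : (i : ℕ) + 1 < (j : ℕ)) :
    (PresentedGroup.of i : BraidGroup m) * PresentedGroup.of j =
      PresentedGroup.of j * PresentedGroup.of i := by
  have hr : (FreeGroup.of i * FreeGroup.of j * (FreeGroup.of i)⁻¹ * (FreeGroup.of j)⁻¹)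
      ∈ braidRels m := Or.inl ⟨i, j, h, rfl⟩
  have h1 := braid_rel_eq_one hr
  simp only [QuotientGroup.mk_mul, QuotientGroup.mk_inv] at h1
  have h2 : (PresentedGroup.of i : BraidGroup m) * PresentedGroup.of j *
      (PresentedGroup.of i)⁻¹ * (PresentedGroup.of j)⁻¹ = 1 := h1
  rw [mul_inv_eq_one, mul_inv_eq_iff_eq_mul] at h2
  exact h2

lemma of_braid {m : ℕ} (i j : Fin m) (h : (i : ℕ) + 1 = (j : ℕ)) :
    (PresentedGroup.of i : BraidGroup m) * PresentedGroup.of j * PresentedGroup.of i =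
      PresentedGroup.of j * PresentedGroup.of i * PresentedGroup.of j := by
  have hr : (FreeGroup.of i * FreeGroup.of j * FreeGroup.of i *
      (FreeGroup.of j * FreeGroup.of i * FreeGroup.of j)⁻¹) ∈ braidRels m :=
    Or.inr ⟨i, j, h, rfl⟩
  have h1 := braid_rel_eq_one hr
  simp only [QuotientGroup.mk_mul, QuotientGroup.mk_inv] at h1
  have h2 : (PresentedGroup.of i : BraidGroup m) * PresentedGroup.of j * PresentedGroup.of i *
      ((PresentedGroup.of j : BraidGroup m) * PresentedGroup.of i * PresentedGroup.of j)⁻¹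
        = 1 := h1
  rw [mul_inv_eq_one] at h2
  exact h2

lemma bsig_comm {m : ℕ} {k l : ℕ} (hk : 1 ≤ k) (hkl : k + 1 < l) (hl : l ≤ m) :
    (bσ k : BraidGroup m) * bσ l = bσ l * bσ k := by
  have hk' : k - 1 < m := by omega
  have hl' : l - 1 < m := by omega
  have e1 : (bσ k : BraidGroup m) = PresentedGroup.of (⟨k - 1, hk'⟩ : Fin m) := dif_pos hk'
  have e2 : (bσ l : BraidGroup m) = PresentedGroup.of (⟨l - 1, hl'⟩ : Fin m) := dif_pos hl'
  rw [e1, e2]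
  exact of_comm ⟨k - 1, hk'⟩ ⟨l - 1, hl'⟩ (by simp only []; omega)

lemma bsig_braid {m : ℕ} {k l : ℕ} (hk : 1 ≤ k) (hkl : k + 1 = l) (hl : l ≤ m) :
    (bσ k : BraidGroup m) * bσ l * bσ k = bσ l * bσ k * bσ l := by
  have hk' : k - 1 < m := by omega
  have hl' : l - 1 < m := by omega
  have e1 : (bσ k : BraidGroup m) = PresentedGroup.of (⟨k - 1, hk'⟩ : Fin m) := dif_pos hk'
  have e2 : (bσ l : BraidGroup m) = PresentedGroup.of (⟨l - 1, hl'⟩ : Fin m) := dif_pos hl'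
  rw [e1, e2]
  exact of_braid ⟨k - 1, hk'⟩ ⟨l - 1, hl'⟩ (by simp only []; omega)

lemma bs_comm (n : ℕ) (i j : ℕ) (hi : 1 ≤ i) (hij : i + 1 < j) (hj : j < n) :
    (bs i : BraidGroup (2 * n - 1)) * bs j = bs j * bs i := by
  have H : ∀ k l : ℕ, 2*i - 1 ≤ k → k ≤ 2*i + 1 → 2*j - 1 ≤ l → l ≤ 2*j + 1 →
      Commute (bσ k : BraidGroup (2 * n - 1)) (bσ l) := by
    intro k l h1 h2 h3 h4
    exact bsig_comm (by omega) (by omega) (by omega)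
  show Commute _ _
  unfold bs
  repeat'
    first
      | apply Commute.mul_left
      | apply Commute.mul_right
  all_goals exact H _ _ (by omega) (by omega) (by omega) (by omega)

lemma bs_braid (n : ℕ) (i : ℕ) (hi : 1 ≤ i) (hin : i + 1 < n) :
    (bs i : BraidGroup (2 * n - 1)) * bs (i + 1) * bs i =
      bs (i + 1) * bs i * bs (i + 1) := by
  have hb : ∀ k l : ℕ, 1 ≤ k → k + 1 = l → l ≤ 2*i + 3 →
      (bσ k : BraidGroup (2 * n - 1)) * bσ l * bσ k = bσ l * bσ k * bσ l := by
    intro k l h1 h2 h3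
    exact bsig_braid h1 h2 (by omega)
  have hc : ∀ k l : ℕ, 1 ≤ k → k + 1 < l → l ≤ 2*i + 3 →
      (bσ k : BraidGroup (2 * n - 1)) * bσ l = bσ l * bσ k := by
    intro k l h1 h2 h3
    exact bsig_comm h1 h2 (by omega)
  have key := cable_braid (bσ (2*i - 1) : BraidGroup (2 * n - 1)) (bσ (2*i))
      (bσ (2*i + 1)) (bσ (2*i + 2)) (bσ (2*i + 3))
      (hb _ _ (by omega) (by omega) (by omega))
      (hb _ _ (by omega) (by omega) (by omega))
      (hb _ _ (by omega) (by omega) (by omega))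
      (hb _ _ (by omega) (by omega) (by omega))
      (hc _ _ (by omega) (by omega) (by omega))
      (hc _ _ (by omega) (by omega) (by omega))
      (hc _ _ (by omega) (by omega) (by omega))
      (hc _ _ (by omega) (by omega) (by omega))
      (hc _ _ (by omega) (by omega) (by omega))
      (hc _ _ (by omega) (by omega) (by omega))
  simp only [bs, show 2*(i+1) = 2*i + 2 from by ring, show 2*i + 2 - 1 = 2*i + 1 from by omega,
    show 2*i + 2 + 1 = 2*i + 3 from rfl, mul_assoc]
  exact key


theorem stmt12 (n : ℕ) (hn : 2 ≤ n) :
    ∀ i j : ℕ, 1 ≤ i → i < n → 1 ≤ j → j < n →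
      ((i + 1 < j ∨ j + 1 < i) →
        (bs i : BraidGroup (2 * n - 1)) * bs j = bs j * bs i) ∧
      ((j = i + 1 ∨ i = j + 1) →
        (bs i : BraidGroup (2 * n - 1)) * bs j * bs i = bs j * bs i * bs j) := by
  intro i j hi1 hin hj1 hjn
  constructor
  · rintro (h | h)
    · exact bs_comm n i j hi1 h hjn
    · exact (bs_comm n j i hj1 h hin).symm
  · rintro (h | h)
    · subst h; exact bs_braid n i hi1 hjn
    · subst h; exact (bs_braid n j hj1 hin).symm
end

section
/- In any group G, suppose elements p_1, p_2, s_1, s_2, t_1, t_2, t_3 satisfy the relations (P4) s_1 s_2 s_1 = s_2 s_1 s_2, (P6) p_1 s_2 s_1 = s_2 s_1 p_2, (P7) p_2 p_1 s_2 = s_1 p_2 p_1, (P8) p_2 s_1 s_2 = s_1 s_2 p_1, (P9) p_i t_i s_i p_i = s_i t_i for i = 1,2, (P12)/(P13) the commutation rules s_i t_j = t_{σ(j)} s_i (where σ swaps i and i+1 and fixes other indices). Then p_2 p_1 s_1 s_2 t_3 p_2 p_1 = s_2 s_1 t_1. -/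
/-- The auxiliary deduction (⋆): in any group, from the relations (P4), (P6), (P7), (P8),
(P9) for i = 1, 2, and the commutation rules (P12)/(P13) between the `s` and `t` elements,
one deduces `p₂ p₁ s₁ s₂ t₃ p₂ p₁ = s₂ s₁ t₁`. -/
theorem stmt17 {G : Type*} [Group G] (p₁ p₂ s₁ s₂ t₁ t₂ t₃ : G)
    (hP4 : s₁ * s₂ * s₁ = s₂ * s₁ * s₂)
    (hP6 : p₁ * s₂ * s₁ = s₂ * s₁ * p₂)
    (hP7 : p₂ * p₁ * s₂ = s₁ * p₂ * p₁)
    (hP8 : p₂ * s₁ * s₂ = s₁ * s₂ * p₁)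
    (hP9₁ : p₁ * t₁ * s₁ * p₁ = s₁ * t₁)
    (hP9₂ : p₂ * t₂ * s₂ * p₂ = s₂ * t₂)
    (h₁ : s₁ * t₁ = t₂ * s₁)
    (h₂ : s₁ * t₂ = t₁ * s₁)
    (h₃ : s₁ * t₃ = t₃ * s₁)
    (h₄ : s₂ * t₂ = t₃ * s₂)
    (h₅ : s₂ * t₃ = t₂ * s₂)
    (h₆ : s₂ * t₁ = t₁ * s₂) :
    p₂ * p₁ * s₁ * s₂ * t₃ * p₂ * p₁ = s₂ * s₁ * t₁ := by
  calc p₂ * p₁ * s₁ * s₂ * t₃ * p₂ * p₁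
      = p₂ * p₁ * s₁ * t₂ * s₂ * p₂ * p₁ := by
        have h := congrArg (fun y => p₂ * p₁ * s₁ * y * (p₂ * p₁)) h₅
        group at h ⊢; exact h
    _ = p₂ * p₁ * t₁ * s₁ * s₂ * p₂ * p₁ := by
        have h := congrArg (fun y => p₂ * p₁ * y * (s₂ * p₂ * p₁)) h₂
        group at h ⊢; exact h
    _ = p₂ * s₁ * t₁ * p₁⁻¹ * s₂ * p₂ * p₁ := by
        have h := congrArg (fun y => p₂ * y * (p₁⁻¹ * s₂ * p₂ * p₁)) hP9₁
        group at h ⊢; exact h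
    _ = p₂ * s₁ * t₁ * s₂ * s₁ * p₂⁻¹ * s₁⁻¹ * p₂ * p₁ := by
        have h := congrArg
          (fun y => p₂ * s₁ * t₁ * p₁⁻¹ * y * (p₂⁻¹ * s₁⁻¹ * p₂ * p₁)) hP6
        group at h ⊢; exact h.symm
    _ = p₂ * s₁ * t₁ * s₂ * s₁ * p₁ * s₂⁻¹ := by
        have h := congrArg
          (fun y => p₂ * s₁ * t₁ * s₂ * s₁ * p₂⁻¹ * s₁⁻¹ * y * s₂⁻¹) hP7
        group at h ⊢; exact h
    _ = p₂ * s₁ * s₂ * t₁ * s₁ * p₁ * s₂⁻¹ := by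
        have h := congrArg (fun y => p₂ * s₁ * y * (s₁ * p₁ * s₂⁻¹)) h₆
        group at h ⊢; exact h.symm
    _ = p₂ * s₁ * s₂ * p₁⁻¹ * s₁ * t₁ * s₂⁻¹ := by
        have h := congrArg (fun y => p₂ * s₁ * s₂ * p₁⁻¹ * y * s₂⁻¹) hP9₁
        group at h ⊢; exact h
    _ = s₁ * s₂ * s₁ * t₁ * s₂⁻¹ := by
        have h := congrArg (fun y => y * (p₁⁻¹ * s₁ * t₁ * s₂⁻¹)) hP8
        group at h ⊢; exact h
    _ = s₂ * s₁ * s₂ * t₁ * s₂⁻¹ := by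
        have h := congrArg (fun y => y * (t₁ * s₂⁻¹)) hP4
        group at h ⊢; exact h
    _ = s₂ * s₁ * t₁ := by
        have h := congrArg (fun y => s₂ * s₁ * y * s₂⁻¹) h₆
        group at h ⊢; exact h
end
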